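/- arXiv:1802.10386 — 11 statements merged into one kernel-verified Lean document; each statement's English description precedes it below -/
import Mathlib

section
/- Let p ≥ 1 be an integer and let F = pK1 + K2. Let Q be the graph obtained from two disjoint copies of the star K_{1,p} by adding an edge between their central vertices u and v, and let G' be the disjoint union of a graph G and Q. Then G' has a spanning subgraph with at least one edge satisfying the F-closure if and only if G has no independent set of p vertices. -/
open SimpleGraph

/-- A spanning subgraph `H` of `G` *satisfies the `F`-closure* if for every vertex subset `S`
such that `H[S]` is isomorphic to `F`, the induced subgraph `G[S]` is not isomorphic to `F`. -/
def SatisfiesClosure {V W : Type*} (G H : SimpleGraph V) (F : SimpleGraph W) : Prop :=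
  ∀ S : Set V, Nonempty ((H.induce S) ≃g F) → ¬ Nonempty ((G.induce S) ≃g F)

/-- The graph `pK1 + K2`: the disjoint union of `p` isolated vertices and one edge. -/
def pK1K2 (p : ℕ) : SimpleGraph (Fin p ⊕ Fin 2) :=
  SimpleGraph.fromRel (fun a b => a.isRight ∧ b.isRight)

/-- The disjoint union of two simple graphs. -/
def sumGraph {α β : Type*} (G : SimpleGraph α) (K : SimpleGraph β) : SimpleGraph (α ⊕ β) :=
  SimpleGraph.fromRel (fun a b =>
    (∃ x y, a = Sum.inl x ∧ b = Sum.inl y ∧ G.Adj x y) ∨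
    (∃ x y, a = Sum.inr x ∧ b = Sum.inr y ∧ K.Adj x y))

/-- The graph `Q`: two disjoint copies of the star `K_{1,p}` whose centers `Sum.inl 0` and
`Sum.inl 1` are joined by an edge; the leaves `Sum.inr (i, j)` are adjacent to center
`Sum.inl i`. -/
def starStarQ (p : ℕ) : SimpleGraph (Fin 2 ⊕ (Fin 2 × Fin p)) :=
  SimpleGraph.fromRel (fun a b =>
    (a = Sum.inl 0 ∧ b = Sum.inl 1) ∨ (∃ i j, a = Sum.inl i ∧ b = Sum.inr (i, j)))

/-!
A copy of `pK1 + K2` induced on a vertex set `S` is the same as `p + 2` vertices spanning exactly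
one edge. Hence, for `H ≤ G'`, the `F`-closure says that no edge of `H` is the only edge of `G'`
on some `(p + 2)`-set. In `G' = G + Q` every edge other than the central edge `uv` is such an edge:
add the `p` leaves of a star that neither endpoint touches. The central edge is one exactly when
`G` has an independent `p`-set, because every leaf is adjacent to `u` or `v`. So `H` can only be the
single edge `uv`, and that works iff `G` has no independent `p`-set.
-/

section General
variable {α β : Type*}

lemma sumGraph_eq_sum (G : SimpleGraph α) (K : SimpleGraph β) : sumGraph G K = G ⊕g K := by
  ext (a | a) (b | b) <;>
    simp [sumGraph, and_iff_right_of_imp SimpleGraph.Adj.ne, eq_comm, G.adj_comm, K.adj_comm]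

lemma pK1K2_adj {p : ℕ} {x y : Fin p ⊕ Fin 2} :
    (pK1K2 p).Adj x y ↔ s(x, y) = s(.inr 0, .inr 1) := by
  rcases x with x | x <;> rcases y with y | y <;> simp [pK1K2]
  omega

lemma Equiv.sym2_mk_eq_mk_iff (e : α ≃ β) {u v a b : α} :
    s(e u, e v) = s(e a, e b) ↔ s(u, v) = s(a, b) := by
  simp

lemma nonempty_iso_pK1K2_iff (Γ : SimpleGraph β) (p : ℕ) :
    Nonempty (Γ ≃g pK1K2 p) ↔
      ENat.card β = p + 2 ∧ ∃ a b, ∀ u v, Γ.Adj u v ↔ s(u, v) = s(a, b) := by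
  constructor
  · rintro ⟨f⟩
    refine ⟨by simp [ENat.card_congr f.toEquiv], f.symm (.inr 0), f.symm (.inr 1), fun u v => ?_⟩
    rw [← f.map_adj_iff, pK1K2_adj, ← f.toEquiv.sym2_mk_eq_mk_iff]
    simp
  · rintro ⟨hcard, a, b, hadj⟩
    have hab : a ≠ b := ((hadj a b).2 rfl).ne
    have : Finite β :=
      ENat.card_lt_top.1 (by rw [hcard]; exact_mod_cast ENat.natCast_lt_top (p + 2))
    let _ := Fintype.ofFinite β
    have hcard' : Fintype.card β = Fintype.card (Fin p ⊕ Fin 2) := by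
      rw [ENat.card_eq_coe_fintype_card] at hcard
      simpa using (by exact_mod_cast hcard : Fintype.card β = p + 2)
    -- compose any bijection with two swaps moving `a, b` onto the edge of `pK1K2 p`
    let e₀ := Fintype.equivOfCardEq hcard'
    let e₁ := e₀.trans (Equiv.swap (e₀ a) (.inr 0))
    let e := e₁.trans (Equiv.swap (e₁ b) (.inr 1))
    have hea : e a = .inr 0 := by
      have : e₁ a = .inr 0 := Equiv.swap_apply_left _ _
      rw [Equiv.trans_apply, this, Equiv.swap_apply_of_ne_of_ne
        (this ▸ e₁.injective.ne hab) (by simp)]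
    have heb : e b = .inr 1 := Equiv.swap_apply_left _ _
    exact ⟨⟨e, fun {u v} => by rw [pK1K2_adj, hadj, ← hea, ← heb, e.sym2_mk_eq_mk_iff]⟩⟩

def SimpleGraph.IsOnlyEdgeOn (Γ : SimpleGraph α) (S : Set α) (a b : α) : Prop :=
  a ∈ S ∧ b ∈ S ∧ ∀ u ∈ S, ∀ v ∈ S, Γ.Adj u v ↔ s(u, v) = s(a, b)

namespace SimpleGraph.IsOnlyEdgeOn
variable {Γ H : SimpleGraph α} {S : Set α} {a b : α}

lemma adj (h : Γ.IsOnlyEdgeOn S a b) : Γ.Adj a b :=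
  (h.2.2 a h.1 b h.2.1).2 rfl

lemma symm (h : Γ.IsOnlyEdgeOn S a b) : Γ.IsOnlyEdgeOn S b a :=
  ⟨h.2.1, h.1, fun u hu v hv => by rw [h.2.2 u hu v hv, Sym2.eq_swap (a := a)]⟩

lemma mono (hle : H ≤ Γ) (hab : H.Adj a b) (h : Γ.IsOnlyEdgeOn S a b) : H.IsOnlyEdgeOn S a b := by
  refine ⟨h.1, h.2.1, fun u hu v hv => ⟨fun huv => (h.2.2 u hu v hv).1 (hle huv), fun huv => ?_⟩⟩
  rcases Sym2.eq_iff.1 huv with ⟨rfl, rfl⟩ | ⟨rfl, rfl⟩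
  exacts [hab, hab.symm]

end SimpleGraph.IsOnlyEdgeOn

lemma nonempty_induce_iso_pK1K2_iff (Γ : SimpleGraph α) (S : Set α) (p : ℕ) :
    Nonempty (Γ.induce S ≃g pK1K2 p) ↔ S.encard = p + 2 ∧ ∃ a b, Γ.IsOnlyEdgeOn S a b := by
  rw [nonempty_iso_pK1K2_iff]
  refine and_congr Iff.rfl ⟨?_, ?_⟩
  · rintro ⟨a, b, h⟩
    exact ⟨a, b, a.2, b.2, fun u hu v hv => by
      simpa [Sym2.eq_iff, Subtype.ext_iff] using h ⟨u, hu⟩ ⟨v, hv⟩⟩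
  · rintro ⟨a, b, ha, hb, h⟩
    exact ⟨⟨a, ha⟩, ⟨b, hb⟩, fun u v => by
      simpa [Sym2.eq_iff, Subtype.ext_iff] using h u u.2 v v.2⟩

lemma satisfiesClosure_pK1K2_iff {G H : SimpleGraph α} {p : ℕ} (hle : H ≤ G) :
    SatisfiesClosure G H (pK1K2 p) ↔
      ∀ (S : Set α) a b, S.encard = p + 2 → G.IsOnlyEdgeOn S a b → ¬ H.Adj a b := by
  simp only [SatisfiesClosure, nonempty_induce_iso_pK1K2_iff]
  constructor
  · rintro hcl S a b hS hG hab
    exact hcl S ⟨hS, a, b, hG.mono hle hab⟩ ⟨hS, a, b, hG⟩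
  · rintro hcl S ⟨hS, a, b, hH⟩ ⟨-, c, d, hG⟩
    have hcd : s(a, b) = s(c, d) := (hG.2.2 a hH.1 b hH.2.1).1 (hle hH.adj)
    exact hcl S c d hS hG ((hH.2.2 c hG.1 d hG.2.1).2 hcd.symm)

lemma exists_isOnlyEdgeOn_of_isIndepSet {Γ : SimpleGraph α} {a b : α} {T : Set α}
    (hab : Γ.Adj a b) (hT : Γ.IsIndepSet T) (haT : ∀ t ∈ T, ¬ Γ.Adj a t)
    (hbT : ∀ t ∈ T, ¬ Γ.Adj b t) :
    ∃ S : Set α, S.encard = T.encard + 2 ∧ Γ.IsOnlyEdgeOn S a b := by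
  have ha : a ∉ T := fun h => hbT a h hab.symm
  have hb : b ∉ T := fun h => haT b h hab
  refine ⟨{a, b} ∪ T, ?_, by simp, by simp, ?_⟩
  · rw [Set.encard_union_eq (by simp [ha, hb]), Set.encard_pair hab.ne, add_comm]
  · rintro u ((rfl | rfl) | hu) v ((rfl | rfl) | hv)
    all_goals simp only [Sym2.eq_iff]
    all_goals grind [Set.Pairwise, SimpleGraph.adj_symm, SimpleGraph.irrefl]

lemma exists_isIndepSet_ncard_eq_iff {G : SimpleGraph α} {p : ℕ} (hp : p ≠ 0) :
    (∃ A : Set α, G.IsIndepSet A ∧ A.ncard = p) ↔ ∃ A : Set α, G.IsIndepSet A ∧ A.encard = p := by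
  refine exists_congr fun A => and_congr_right fun _ => ⟨fun h => ?_, fun h => ?_⟩
  · rw [← (Set.finite_of_ncard_ne_zero (h ▸ hp)).cast_ncard_eq, h]
  · rw [Set.ncard_def, h, ENat.toNat_natCast]

end General

section StarStar
variable {V : Type*} {G : SimpleGraph V} {p : ℕ} {i i' : Fin 2} {j : Fin p}

@[simp] lemma starStarQ_adj_inl_inl : (starStarQ p).Adj (.inl i) (.inl i') ↔ i ≠ i' := by
  fin_cases i <;> fin_cases i' <;> simp [starStarQ]

@[simp] lemma starStarQ_adj_inl_inr : (starStarQ p).Adj (.inl i) (.inr (i', j)) ↔ i = i' := by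
  fin_cases i <;> fin_cases i' <;> simp [starStarQ]

@[simp] lemma starStarQ_adj_inr_inl : (starStarQ p).Adj (.inr (i', j)) (.inl i) ↔ i = i' := by
  rw [adj_comm, starStarQ_adj_inl_inr]

@[simp] lemma starStarQ_not_adj_inr_inr {x y : Fin 2 × Fin p} :
    ¬ (starStarQ p).Adj (.inr x) (.inr y) := by
  simp [starStarQ]

lemma exists_isOnlyEdgeOn_of_not_adj_leaves (i : Fin 2) {a b : V ⊕ (Fin 2 ⊕ Fin 2 × Fin p)}
    (hab : (G ⊕g starStarQ p).Adj a b)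
    (ha : ∀ j, ¬ (G ⊕g starStarQ p).Adj a (.inr (.inr (i, j))))
    (hb : ∀ j, ¬ (G ⊕g starStarQ p).Adj b (.inr (.inr (i, j)))) :
    ∃ S : Set (V ⊕ (Fin 2 ⊕ Fin 2 × Fin p)), S.encard = p + 2 ∧
      (G ⊕g starStarQ p).IsOnlyEdgeOn S a b := by
  let leaf : Fin p → V ⊕ (Fin 2 ⊕ Fin 2 × Fin p) := fun j => .inr (.inr (i, j))
  have hleaf : Function.Injective leaf := fun j j' h => by simpa [leaf] using h
  obtain ⟨S, hS, hSab⟩ := exists_isOnlyEdgeOn_of_isIndepSet hab (T := Set.range leaf)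
    (by rintro _ ⟨j, rfl⟩ _ ⟨j', rfl⟩ -; simp [leaf]) (by rintro _ ⟨j, rfl⟩; exact ha j)
    (by rintro _ ⟨j, rfl⟩; exact hb j)
  refine ⟨S, ?_, hSab⟩
  rw [hS, ← Set.image_univ, hleaf.encard_image]
  simp

lemma exists_isOnlyEdgeOn_of_ne_centerEdge {a b : V ⊕ (Fin 2 ⊕ Fin 2 × Fin p)}
    (hab : (G ⊕g starStarQ p).Adj a b) (hne : s(a, b) ≠ s(.inr (.inl 0), .inr (.inl 1))) :
    ∃ S : Set (V ⊕ (Fin 2 ⊕ Fin 2 × Fin p)), S.encard = p + 2 ∧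
      (G ⊕g starStarQ p).IsOnlyEdgeOn S a b := by
  rcases a with a | i | ⟨i, j⟩ <;> rcases b with b | i' | ⟨i', j'⟩ <;> simp at hab
  · exact exists_isOnlyEdgeOn_of_not_adj_leaves 0 (by simpa) (by simp) (by simp)
  · fin_cases i <;> fin_cases i' <;> simp [Sym2.eq_swap] at hab hne
  · subst hab
    exact exists_isOnlyEdgeOn_of_not_adj_leaves (i + 1) (by simp) (by simp) (by simp)
  · subst hab
    exact exists_isOnlyEdgeOn_of_not_adj_leaves (i' + 1) (by simp) (by simp) (by simp)

lemma exists_isOnlyEdgeOn_centerEdge_iff :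
    (∃ S : Set (V ⊕ (Fin 2 ⊕ Fin 2 × Fin p)), S.encard = p + 2 ∧
      (G ⊕g starStarQ p).IsOnlyEdgeOn S (.inr (.inl 0)) (.inr (.inl 1))) ↔
      ∃ A : Set V, G.IsIndepSet A ∧ A.encard = p := by
  constructor
  · rintro ⟨S, hS, hSo⟩
    have hcenter : ∀ i, (.inr (.inl i) : V ⊕ (Fin 2 ⊕ Fin 2 × Fin p)) ∈ S := by
      intro i; fin_cases i; exacts [hSo.1, hSo.2.1]
    -- a leaf in `S` would give `S` a second edge, to its centre
    have hS_eq : S = {.inr (.inl 0), .inr (.inl 1)} ∪ Sum.inl '' (Sum.inl ⁻¹' S) := by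
      refine Set.Subset.antisymm (fun w hw => ?_) ?_
      · rcases w with x | i | ⟨i, j⟩
        · exact Or.inr ⟨x, hw, rfl⟩
        · fin_cases i <;> simp
        · have := (hSo.2.2 _ hw _ (hcenter i)).1 (by simp)
          simp at this
      · rintro w ((rfl | rfl) | ⟨x, hx, rfl⟩)
        exacts [hSo.1, hSo.2.1, hx]
    refine ⟨Sum.inl ⁻¹' S, fun x hx y hy _ hxy => ?_, ?_⟩
    · have := (hSo.2.2 _ hx _ hy).1 (by simpa using hxy)
      simp at this
    · rw [hS_eq, Set.encard_union_eq (by simp), Set.encard_pair (by simp),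
        Sum.inl_injective.encard_image, add_comm] at hS
      simpa using hS
  · rintro ⟨A, hA, hAp⟩
    obtain ⟨S, hS, hSo⟩ := exists_isOnlyEdgeOn_of_isIndepSet
      (Γ := G ⊕g starStarQ p) (a := .inr (.inl 0)) (b := .inr (.inl 1)) (T := Sum.inl '' A)
      (by simp)
      (by rintro _ ⟨x, hx, rfl⟩ _ ⟨y, hy, rfl⟩ hne; simpa using hA hx hy (by rintro rfl; simp at hne))
      (by simp) (by simp)
    exact ⟨S, by rw [hS, Sum.inl_injective.encard_image, hAp], hSo⟩

end StarStar

theorem stmt_4_general {V : Type*} (G : SimpleGraph V) (p : ℕ) (hp : 1 ≤ p) :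
    (∃ H ≤ sumGraph G (starStarQ p),
      SatisfiesClosure (sumGraph G (starStarQ p)) H (pK1K2 p) ∧ 1 ≤ H.edgeSet.ncard) ↔
    ¬ ∃ S : Set V, (S.Pairwise fun x y => ¬ G.Adj x y) ∧ S.ncard = p := by
  rw [sumGraph_eq_sum, exists_isIndepSet_ncard_eq_iff (by omega),
    ← exists_isOnlyEdgeOn_centerEdge_iff]
  constructor
  · rintro ⟨H, hle, hcl, hE⟩ ⟨S, hS, hSo⟩
    obtain ⟨a, b, hab⟩ := ne_bot_iff_exists_adj.1 <|
      edgeSet_nonempty.1 (Set.nonempty_of_ncard_ne_zero (s := H.edgeSet) (by omega))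
    rw [satisfiesClosure_pK1K2_iff hle] at hcl
    by_cases hcen : s(a, b) = s(.inr (.inl 0), .inr (.inl 1))
    · rcases Sym2.eq_iff.1 hcen with ⟨rfl, rfl⟩ | ⟨rfl, rfl⟩
      exacts [hcl S _ _ hS hSo hab, hcl S _ _ hS hSo.symm hab]
    · obtain ⟨S, hS, hSo⟩ := exists_isOnlyEdgeOn_of_ne_centerEdge (hle hab) hcen
      exact hcl S a b hS hSo hab
  · intro hno
    have hle : edge (.inr (.inl 0)) (.inr (.inl 1)) ≤ G ⊕g starStarQ p :=
      (edge_le_iff _).2 (Or.inr (by simp))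
    refine ⟨_, hle, (satisfiesClosure_pK1K2_iff hle).2 ?_, by
      rw [edgeSet_edge_of_ne (by simp), Set.ncard_singleton]⟩
    intro S a b hS hSo hab
    obtain ⟨⟨rfl, rfl⟩ | ⟨rfl, rfl⟩, -⟩ := (edge_adj _ _ _ _).1 hab
    exacts [hno ⟨S, hS, hSo⟩, hno ⟨S, hS, hSo.symm⟩]

/-- For `F = pK1 + K2` and `G' = G + Q`, the graph `G'` has a spanning subgraph with at least one
edge satisfying the `F`-closure iff `G` has no independent set of `p` vertices. -/
theorem stmt_4 {V : Type*} [Fintype V] (G : SimpleGraph V) (p : ℕ) (hp : 1 ≤ p) :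
    (∃ H ≤ sumGraph G (starStarQ p),
      SatisfiesClosure (sumGraph G (starStarQ p)) H (pK1K2 p) ∧ 1 ≤ H.edgeSet.ncard) ↔
    ¬ ∃ S : Set V, (S.Pairwise fun x y => ¬ G.Adj x y) ∧ S.ncard = p :=
  stmt_4_general G p hp
end

section
/- Let F be a fixed graph, G a graph, and k a nonnegative integer. Let v_1, …, v_p be pairwise false twins of G with p = |V(F)| + k + 1, and let G' = G − v_p. Then G has a spanning subgraph satisfying the F-closure with at least k edges if and only if G' has a spanning subgraph satisfying the F-closure with at least k edges. -/
/-!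
Forward direction: restrict `H` to `G - v_p`. If some twin is isolated in `H`, first transport
`H` along the swap of that twin with `v_p`, an automorphism of `G`; otherwise the twins other
than `v_p` are pairwise nonadjacent and each has an `H`-edge, which gives `p - 1 ≥ k` distinct
edges of `H - v_p`.

Backward direction: add `v_p` to `H'` as an isolated vertex. If `H[S] ≅ F ≅ G[S]`, then
`H[S] = G[S]` by counting edges. As `|S| = |V(F)| < p`, some twin `u` lies outside `S`;
swapping `v_p` and `u` maps `S` to a set avoiding `v_p` on which `H` still agrees with `G`
(every such edge comes from an `H`-edge of `S`, which avoids both `v_p` and `u`), contradicting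
the closure property of `H'`.
-/

open SimpleGraph

namespace SimpleGraph

variable {V V₂ : Type*}

noncomputable def comapInduceIso (f : V ↪ V₂) (K : SimpleGraph V₂) (S : Set V) :
    (K.comap f).induce S ≃g K.induce (f '' S) :=
  { Equiv.Set.image f S f.injective with map_rel_iff' := Iff.rfl }

theorem ncard_edgeSet_map (f : V ↪ V₂) (K : SimpleGraph V) :
    (K.map f).edgeSet.ncard = K.edgeSet.ncard := by
  rw [edgeSet_map, Set.ncard_image_of_injective _ f.sym2Map.injective]

theorem Iso.ncard_edgeSet_eq {K : SimpleGraph V} {L : SimpleGraph V₂} (e : K ≃g L) :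
    K.edgeSet.ncard = L.edgeSet.ncard := by
  simpa only [Nat.card_coe_set_eq] using Nat.card_congr e.mapEdgeSet

theorem eq_of_le_of_iso [Finite V] {K L : SimpleGraph V} (hle : K ≤ L) (e : K ≃g L) : K = L :=
  edgeSet_injective <| Set.eq_of_subset_of_ncard_le (edgeSet_mono hle) e.ncard_edgeSet_eq.ge

theorem ncard_edgeSet_induce_of_notMem_support {H : SimpleGraph V} {a : V} (ha : a ∉ H.support) :
    (H.induce {x | x ≠ a}).edgeSet.ncard = H.edgeSet.ncard := by
  conv_rhs => rw [← (spanningCoe_induce_eq_self (G := H) _).2 fun x hx (hxa : x = a) => ha (hxa ▸ hx)]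
  exact (ncard_edgeSet_map _ _).symm

theorem card_le_ncard_edgeSet [Finite V] {H : SimpleGraph V} {ι : Type*} (u : ι → V)
    (hu : Function.Injective u) (hind : ∀ i j, ¬ H.Adj (u i) (u j))
    (hsupp : ∀ i, u i ∈ H.support) : Nat.card ι ≤ H.edgeSet.ncard := by
  choose w hw using hsupp
  rw [← Nat.card_coe_set_eq]
  refine Nat.card_le_card_of_injective (fun i => ⟨s(u i, w i), hw i⟩) fun i j hij => ?_
  rcases Sym2.eq_iff.1 (congrArg Subtype.val hij) with ⟨h, -⟩ | ⟨h, -⟩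
  · exact hu h
  · exact (hind j i (h ▸ hw j)).elim

variable {G : SimpleGraph V} {a b : V}

theorem not_adj_of_neighborSet_eq (h : G.neighborSet a = G.neighborSet b) : ¬ G.Adj a b :=
  fun hab => G.loopless.irrefl b (h ▸ hab : b ∈ G.neighborSet b)

theorem comap_swap_eq_of_neighborSet_eq [DecidableEq V] (h : G.neighborSet a = G.neighborSet b) :
    G.comap (Equiv.swap a b) = G := by
  have h' : ∀ z, G.Adj a z ↔ G.Adj b z := fun z => Set.ext_iff.1 h z
  ext x y
  simp only [comap_adj, Equiv.swap_apply_def]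
  split_ifs <;> subst_vars <;> grind [G.adj_comm, G.loopless.irrefl]

end SimpleGraph

section Closure

variable {V V₂ W : Type*} {G H : SimpleGraph V₂} {F : SimpleGraph W}

theorem SatisfiesClosure.comap (f : V ↪ V₂) (h : SatisfiesClosure G H F) :
    SatisfiesClosure (G.comap f) (H.comap f) F := fun S ⟨φ⟩ ⟨ψ⟩ =>
  h (f '' S) ⟨(comapInduceIso f H S).symm.trans φ⟩ ⟨(comapInduceIso f G S).symm.trans ψ⟩

theorem SatisfiesClosure.of_comap {f : V ↪ V₂} (h : SatisfiesClosure (G.comap f) (H.comap f) F)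
    {S : Set V₂} (hS : S ⊆ Set.range f) (hH : Nonempty (H.induce S ≃g F)) :
    ¬ Nonempty (G.induce S ≃g F) := by
  rw [← Set.image_preimage_eq_of_subset hS] at hH ⊢
  obtain ⟨φ⟩ := hH
  rintro ⟨ψ⟩
  exact h _ ⟨(comapInduceIso f H _).trans φ⟩ ⟨(comapInduceIso f G _).trans ψ⟩

end Closure

section Twins

variable {V W : Type*} [DecidableEq V] {G H : SimpleGraph V} {F : SimpleGraph W} {a b : V}

theorem nonempty_iso_induce_swap_image [Finite W] (hHG : H ≤ G)
    (htwin : G.neighborSet a = G.neighborSet b) (ha : a ∉ H.support) {S : Set V} (hb : b ∉ S)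
    (hH : Nonempty (H.induce S ≃g F)) (hG : Nonempty (G.induce S ≃g F)) :
    Nonempty (H.induce (Equiv.swap a b '' S) ≃g F) ∧
      Nonempty (G.induce (Equiv.swap a b '' S) ≃g F) := by
  obtain ⟨φ⟩ := hH
  obtain ⟨ψ⟩ := hG
  have : Finite S := Finite.of_equiv _ φ.symm.toEquiv
  have hS : H.induce S = G.induce S := eq_of_le_of_iso (fun _ _ h => hHG h) (φ.trans ψ.symm)
  set σ := Equiv.swap a b
  have hGσ : G.comap σ = G := comap_swap_eq_of_neighborSet_eq htwin
  have hσS : H.induce (σ '' S) = G.induce (σ '' S) := by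
    refine le_antisymm (fun _ _ h => hHG h) ?_
    rintro ⟨_, x, hx, rfl⟩ ⟨_, y, hy, rfl⟩ (hxy : G.Adj (σ x) (σ y))
    have hxyH : (H.induce S).Adj ⟨x, hx⟩ ⟨y, hy⟩ := by
      rw [hS, induce_adj, ← hGσ]
      exact hxy
    have hfix : ∀ z ∈ S, z ∈ H.support → σ z = z := fun z hz hzH =>
      Equiv.swap_apply_of_ne_of_ne (fun h => ha (h ▸ hzH)) (fun h => hb (h ▸ hz))
    show H.Adj (σ x) (σ y)
    rwa [hfix x hx ⟨y, hxyH⟩, hfix y hy ⟨x, hxyH.symm⟩]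
  have e : (G.comap σ).induce S ≃g G.induce (σ '' S) := comapInduceIso σ.toEmbedding G S
  rw [hGσ] at e
  exact ⟨⟨hσS ▸ e.symm.trans ψ⟩, ⟨e.symm.trans ψ⟩⟩

end Twins

section TwinFamily

variable {V W ι : Type*} [Fintype ι] {G : SimpleGraph V} {F : SimpleGraph W} {k : ℕ}
  {v : ι → V}

theorem exists_satisfiesClosure_delete_twin [Finite V] (hinj : Function.Injective v)
    (htwins : ∀ i j, G.neighborSet (v i) = G.neighborSet (v j)) (i₀ : ι)
    (hk : k < Fintype.card ι) {H : SimpleGraph V} (hle : H ≤ G) (hcl : SatisfiesClosure G H F)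
    (hkH : k ≤ H.edgeSet.ncard) :
    ∃ H' ≤ G.induce {x | x ≠ v i₀},
      SatisfiesClosure (G.induce {x | x ≠ v i₀}) H' F ∧ k ≤ H'.edgeSet.ncard := by
  classical
  suffices ∃ H₁ ≤ G, SatisfiesClosure G H₁ F ∧ k ≤ (H₁.induce {x | x ≠ v i₀}).edgeSet.ncard by
    obtain ⟨H₁, hle₁, hcl₁, hk₁⟩ := this
    exact ⟨_, comap_monotone _ hle₁, hcl₁.comap _, hk₁⟩
  by_cases hiso : ∃ i, v i ∉ H.support
  · obtain ⟨i, hi⟩ := hiso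
    set σ := Equiv.swap (v i) (v i₀)
    have hGσ : G.comap σ = G := comap_swap_eq_of_neighborSet_eq (htwins i i₀)
    refine ⟨H.comap σ, hGσ ▸ comap_monotone σ.toEmbedding hle, hGσ ▸ hcl.comap σ.toEmbedding, ?_⟩
    have hi₀ : v i₀ ∉ (H.comap σ).support := fun ⟨x, hx⟩ => hi ⟨σ x, by simpa [σ] using hx⟩
    rwa [ncard_edgeSet_induce_of_notMem_support hi₀, (Iso.comap σ H).ncard_edgeSet_eq]
  · push Not at hiso
    refine ⟨H, hle, hcl, ?_⟩
    have hcount := card_le_ncard_edgeSet (H := H.induce {x | x ≠ v i₀})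
      (fun j : {i | i ≠ i₀} => ⟨v j, hinj.ne j.2⟩)
      (fun j j' h => Subtype.ext (hinj (congrArg Subtype.val h)))
      (fun j j' h => not_adj_of_neighborSet_eq (htwins j j') (hle h))
      fun j => by
        obtain ⟨x, hx⟩ := hiso j
        have hx₀ : x ≠ v i₀ := by
          rintro rfl
          exact not_adj_of_neighborSet_eq (htwins j i₀) (hle hx)
        exact ⟨⟨x, hx₀⟩, hx⟩
    rw [Nat.card_eq_fintype_card, Set.card_ne_eq] at hcount
    omega

theorem exists_satisfiesClosure_of_delete_twin [Finite W] (hinj : Function.Injective v)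
    (htwins : ∀ i j, G.neighborSet (v i) = G.neighborSet (v j)) (i₀ : ι)
    (hW : Nat.card W < Fintype.card ι) {H' : SimpleGraph {x | x ≠ v i₀}}
    (hle : H' ≤ G.induce {x | x ≠ v i₀}) (hcl : SatisfiesClosure (G.induce {x | x ≠ v i₀}) H' F)
    (hkH' : k ≤ H'.edgeSet.ncard) :
    ∃ H ≤ G, SatisfiesClosure G H F ∧ k ≤ H.edgeSet.ncard := by
  classical
  have hleG : H'.spanningCoe ≤ G := (map_le_iff_le_comap _ _ _).2 hle
  refine ⟨H'.spanningCoe, hleG, ?_, (ncard_edgeSet_map _ _).ge.trans' hkH'⟩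
  rintro S hH ⟨ψ⟩
  have : Finite S := Finite.of_equiv _ ψ.symm.toEquiv
  obtain ⟨j, hj⟩ : ∃ j, v j ∉ S := by
    by_contra! hS
    have := Nat.card_le_card_of_injective (fun j => (⟨v j, hS j⟩ : S))
      fun j j' h => hinj (congrArg Subtype.val h)
    rw [Nat.card_congr ψ.toEquiv, Nat.card_eq_fintype_card] at this
    omega
  have hi₀ : v i₀ ∉ H'.spanningCoe.support := by
    rw [support_spanningCoe]
    rintro ⟨x, -, hx⟩
    exact x.2 hx
  obtain ⟨hH', hG'⟩ := nonempty_iso_induce_swap_image hleG (htwins i₀ j) hi₀ hj hH ⟨ψ⟩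
  rw [← induce_spanningCoe (G := H')] at hcl
  refine hcl.of_comap ?_ hH' hG'
  rintro _ ⟨x, hx, rfl⟩
  refine ⟨⟨_, fun h => hj ?_⟩, rfl⟩
  have : x = v j := by simpa using Equiv.swap_apply_eq_iff.1 h
  exact this ▸ hx

end TwinFamily

/-- Let `v 0, …, v (p-1)` be pairwise false twins of `G` with `p = |V(F)| + k + 1`, and let
`G'` be `G` minus the last of these vertices. Then `G` has a spanning subgraph satisfying the
`F`-closure with at least `k` edges iff `G'` does. -/
theorem stmt_5 {V W : Type*} [Fintype V] [Fintype W]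
    (G : SimpleGraph V) (F : SimpleGraph W) (k : ℕ)
    (v : Fin (Fintype.card W + k + 1) → V) (hinj : Function.Injective v)
    (htwins : ∀ i j, i ≠ j → G.neighborSet (v i) = G.neighborSet (v j)) :
    (∃ H ≤ G, SatisfiesClosure G H F ∧ k ≤ H.edgeSet.ncard) ↔
    (∃ H' ≤ G.induce {x | x ≠ v (Fin.last (Fintype.card W + k))},
      SatisfiesClosure (G.induce {x | x ≠ v (Fin.last (Fintype.card W + k))}) H' F ∧
        k ≤ H'.edgeSet.ncard) := by
  have htwins' : ∀ i j, G.neighborSet (v i) = G.neighborSet (v j) := fun i j =>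
    (eq_or_ne i j).elim (fun h => h ▸ rfl) (htwins i j)
  constructor
  · rintro ⟨H, hle, hcl, hk⟩
    exact exists_satisfiesClosure_delete_twin hinj htwins' _ (by simp) hle hcl hk
  · rintro ⟨H', hle, hcl, hk⟩
    exact exists_satisfiesClosure_of_delete_twin hinj htwins' _ (by simp) hle hcl hk
end

section
/- Let F be a graph that has a connected component with at least 3 vertices. If M is a matching in a graph G, then the spanning subgraph H of G with E(H) = M satisfies the F-closure. Consequently, if the maximum matching number μ(G) is at least k, then G has a spanning subgraph with at least k edges satisfying the F-closure. -/
open SimpleGraph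

/-- In a graph with subsingleton neighborhoods, reachable vertices are equal or adjacent. -/
lemma reachable_eq_or_adj {V : Type*} {H : SimpleGraph V}
    (hH : ∀ a b c : V, H.Adj a b → H.Adj a c → b = c) {u v : V}
    (h : H.Reachable u v) : u = v ∨ H.Adj u v := by
  obtain ⟨w⟩ := h
  induction w with
  | nil => exact Or.inl rfl
  | cons h' w ih =>
    rcases ih with rfl | hadj
    · exact Or.inr h'
    · exact Or.inl (hH _ _ _ h'.symm hadj)

/-- Suppose `F` has a connected component with at least 3 vertices. If `M` is a matching in `G`,
then the spanning subgraph of `G` whose edges are those of `M` satisfies the `F`-closure.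
Consequently, if `G` has a matching with at least `k` edges (i.e. `μ(G) ≥ k`), then `G` has a
spanning subgraph with at least `k` edges satisfying the `F`-closure. -/
theorem stmt_6 {V W : Type*} [Fintype V] [Fintype W]
    (G : SimpleGraph V) (F : SimpleGraph W)
    (hF : ∃ c : F.ConnectedComponent, 3 ≤ c.supp.ncard)
    (k : ℕ) (M : G.Subgraph) (hM : M.IsMatching) :
    SatisfiesClosure G M.spanningCoe F ∧
    (k ≤ M.edgeSet.ncard → ∃ H ≤ G, SatisfiesClosure G H F ∧ k ≤ H.edgeSet.ncard) := by
  have key : SatisfiesClosure G M.spanningCoe F := by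
    intro S hiso _
    obtain ⟨e⟩ := hiso
    obtain ⟨c, hc⟩ := hF
    obtain ⟨a, ha, b, hb, d, hd, hab, had, hbd⟩ :=
      (Set.two_lt_ncard (Set.toFinite c.supp)).mp (by omega)
    -- pull back to the induced graph
    have hsub : ∀ x y z, (M.spanningCoe.induce S).Adj x y →
        (M.spanningCoe.induce S).Adj x z → y = z := by
      rintro ⟨x, hx⟩ ⟨y, hy⟩ ⟨z, hz⟩ hxy hxz
      have h1 : M.Adj x y := hxy
      have h2 : M.Adj x z := hxz
      obtain ⟨w, _, hw⟩ := hM (M.edge_vert h1)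
      have := (hw y h1).trans (hw z h2).symm
      exact Subtype.ext this
    have hreach : ∀ x y : W, x ∈ c.supp → y ∈ c.supp →
        (M.spanningCoe.induce S).Reachable (e.symm x) (e.symm y) := by
      intro x y hx hy
      have : F.Reachable x y := by
        rw [SimpleGraph.ConnectedComponent.mem_supp_iff] at hx hy
        exact SimpleGraph.ConnectedComponent.exact (hx.trans hy.symm)
      exact this.map e.symm.toHom
    have hab' : e.symm a ≠ e.symm b := fun h => hab (e.symm.injective h)
    have had' : e.symm a ≠ e.symm d := fun h => had (e.symm.injective h)
    have hbd' : e.symm b ≠ e.symm d := fun h => hbd (e.symm.injective h)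
    have h1 := (reachable_eq_or_adj hsub (hreach a b ha hb)).resolve_left hab'
    have h2 := (reachable_eq_or_adj hsub (hreach a d ha hd)).resolve_left had'
    exact hbd' (hsub _ _ _ h1 h2)
  refine ⟨key, fun hk => ⟨M.spanningCoe, M.spanningCoe_le, key, ?_⟩⟩
  have : M.spanningCoe.edgeSet = M.edgeSet := by
    ext e
    induction e with
    | h x y => rfl
  rwa [this]
end

section
/- Let G be a graph, k a positive integer, and s a positive integer. Suppose that every set of pairwise false twins of G has at most s vertices, and that G has a maximal matching M with |M| ≤ k − 1. Then |V(G)| ≤ (2k − 2) + 2^{2k−2} · s. -/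
open SimpleGraph Finset

/-- If every set of pairwise false twins of `G` has at most `s` vertices, and `G` has a maximal
matching `M` with `|M| ≤ k − 1`, then `|V(G)| ≤ (2k − 2) + 2^(2k−2) · s`. -/
theorem stmt_7 {V : Type*} [Fintype V] (G : SimpleGraph V) (k s : ℕ)
    (hk : 0 < k) (hs : 0 < s)
    (htwins : ∀ A : Set V,
      (A.Pairwise fun x y => G.neighborSet x = G.neighborSet y) → A.ncard ≤ s)
    (M : G.Subgraph) (hM : M.IsMatching)
    (hmaximal : ∀ u v, G.Adj u v → u ∈ M.verts ∨ v ∈ M.verts)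
    (hcard : M.edgeSet.ncard ≤ k - 1) :
    Fintype.card V ≤ (2 * k - 2) + 2 ^ (2 * k - 2) * s := by
  classical
  have hVfin : M.verts.Finite := Set.toFinite _
  have hEfin : M.edgeSet.Finite := Set.toFinite _
  set A : Finset V := hVfin.toFinset with hA
  set E : Finset (Sym2 V) := hEfin.toFinset with hE
  -- partner function
  have partner : ∀ v ∈ M.verts, ∃ w, M.Adj v w := fun v hv => (hM hv).exists
  set p : V → V := fun v => if h : v ∈ M.verts then (partner v h).choose else v with hp
  have hpadj : ∀ v ∈ M.verts, M.Adj v (p v) := by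
    intro v hv
    simp only [hp, dif_pos hv]
    exact (partner v hv).choose_spec
  -- Step 1: A.card ≤ 2 * E.card
  have h1 : A.card ≤ 2 * E.card := by
    apply Finset.card_le_mul_card_image_of_maps_to (f := fun v => s(v, p v))
    · intro v hv
      rw [hA, Set.Finite.mem_toFinset] at hv
      rw [hE, Set.Finite.mem_toFinset]
      exact (hpadj v hv)
    · intro e he
      induction e with
      | _ x y =>
        have hsub : {a ∈ A | s(a, p a) = s(x, y)} ⊆ {x, y} := by
          intro a ha
          simp only [Finset.mem_filter] at ha
          have : a ∈ s(x, y) := ha.2 ▸ Sym2.mem_mk_left a (p a)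
          simpa [Sym2.mem_iff, Finset.mem_insert, Finset.mem_singleton] using this
        calc {a ∈ A | s(a, p a) = s(x, y)}.card ≤ ({x, y} : Finset V).card :=
              Finset.card_le_card hsub
          _ ≤ 2 := Finset.card_insert_le _ _ |>.trans (by simp)
  -- Step 2: bound on the complement of A
  have h2 : Aᶜ.card ≤ 2 ^ A.card * s := by
    have hmaps : ∀ v ∈ Aᶜ, G.neighborFinset v ∈ A.powerset := by
      intro v hv
      rw [Finset.mem_compl, hA, Set.Finite.mem_toFinset] at hv
      rw [Finset.mem_powerset]
      intro u hu
      rw [mem_neighborFinset] at hu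
      rw [hA, Set.Finite.mem_toFinset]
      rcases hmaximal v u hu with h | h
      · exact absurd h hv
      · exact h
    have := Finset.card_le_mul_card_image_of_maps_to hmaps s ?_
    · calc Aᶜ.card ≤ s * A.powerset.card := this
        _ = 2 ^ A.card * s := by rw [Finset.card_powerset, mul_comm]
    · intro t _
      have hpair : (↑({a ∈ Aᶜ | G.neighborFinset a = t}) : Set V).Pairwise
          fun x y => G.neighborSet x = G.neighborSet y := by
        intro x hx y hy _
        simp only [Finset.coe_filter, Set.mem_setOf_eq] at hx hy
        have : G.neighborFinset x = G.neighborFinset y := hx.2.trans hy.2.symm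
        have := congrArg (fun (f : Finset V) => (↑f : Set V)) this
        simpa [neighborFinset_def, Set.coe_toFinset] using this
      have := htwins _ hpair
      rwa [Set.ncard_coe_finset] at this
  -- Arithmetic
  have hAcard : A.card ≤ 2 * k - 2 := by
    have hEcard : E.card ≤ k - 1 := by
      rw [hE, ← Set.ncard_eq_toFinset_card _ hEfin]; exact hcard
    calc A.card ≤ 2 * E.card := h1
      _ ≤ 2 * (k - 1) := by omega
      _ = 2 * k - 2 := by omega
  have := Finset.card_add_card_compl A
  calc Fintype.card V = A.card + Aᶜ.card := this.symm
    _ ≤ (2 * k - 2) + 2 ^ A.card * s := by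
        gcongr
    _ ≤ (2 * k - 2) + 2 ^ (2 * k - 2) * s := by
        gcongr
        · exact one_le_two
end

section
/- Let p ≥ 1 and 2 ≤ q ≤ k be integers, and let G be a graph with maximum degree Δ(G) ≤ k − 1 and |V(G)| ≥ 2k(k−1) + pk. Then a spanning subgraph H of G satisfies the (pK1 + qK2)-closure if and only if H satisfies the qK2-closure. -/
open SimpleGraph

/-- The graph `qK2`: the disjoint union of `q` edges. -/
def qK2graph (q : ℕ) : SimpleGraph (Fin q × Fin 2) :=
  SimpleGraph.fromRel (fun a b => a.1 = b.1)

/-- The graph `pK1 + qK2`: the disjoint union of `p` isolated vertices and `q` edges. -/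
def pK1qK2 (p q : ℕ) : SimpleGraph (Fin p ⊕ Fin q × Fin 2) :=
  SimpleGraph.fromRel (fun a b => ∃ x y, a = Sum.inr x ∧ b = Sum.inr y ∧ x.1 = y.1)

/-!
For `H ≤ G` and finite `F`, isomorphisms `H[S] ≃g F ≃g G[S]` force `H[S] = G[S]` (equal edge
counts), so the `F`-closure fails exactly when some `S` carries a copy of `F` in `H` on which `G`
has no further edges. Dropping the isolated vertices of such a copy of `pK1 + qK2` leaves one of
`qK2`. Conversely, a copy of `qK2` has no isolated vertices, so its closed `G`-neighbourhood is
the union of `2q` open neighbourhoods and has at most `2q(k-1) ≤ 2k(k-1)` vertices; among the at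
least `pk` vertices outside it a greedy choice finds `p` independent ones, which extend the copy
to one of `pK1 + qK2`.
-/

open Finset

namespace SimpleGraph

variable {V : Type*}

theorem pK1qK2_eq_sum (p q : ℕ) : pK1qK2 p q = (⊥ : SimpleGraph (Fin p)) ⊕g qK2graph q := by
  ext (a | a) (b | b) <;> simp only [pK1qK2, qK2graph, fromRel_adj, sum_adj, bot_adj] <;> aesop

theorem qK2graph_exists_adj {q : ℕ} (x : Fin q × Fin 2) : ∃ y, (qK2graph q).Adj x y :=
  ⟨(x.1, x.2 + 1), by simp [qK2graph, Prod.ext_iff]⟩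

theorem eq_of_le_of_iso_s9 {α β : Type*} [Finite α] {A B : SimpleGraph α} {F : SimpleGraph β}
    (hAB : A ≤ B) (eA : A ≃g F) (eB : B ≃g F) : A = B := by
  refine edgeSet_injective (Set.eq_of_subset_of_ncard_le (edgeSet_mono hAB) ?_ (Set.toFinite _))
  rw [← Nat.card_coe_set_eq, ← Nat.card_coe_set_eq,
    Nat.card_congr eA.mapEdgeSet, Nat.card_congr eB.mapEdgeSet]

theorem not_satisfiesClosure_iff {W : Type*} [Finite W] {G H : SimpleGraph V} {F : SimpleGraph W}
    (hH : H ≤ G) :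
    ¬ SatisfiesClosure G H F ↔
      ∃ S : Set V, Nonempty (H.induce S ≃g F) ∧ S.Pairwise fun u v ↦ G.Adj u v → H.Adj u v := by
  simp only [SatisfiesClosure, not_forall, not_not, exists_prop]
  constructor
  · rintro ⟨S, ⟨eH⟩, ⟨eG⟩⟩
    have : Finite S := .of_equiv _ eH.symm.toEquiv
    have hHG := eq_of_le_of_iso_s9 (A := H.induce S) (B := G.induce S) (fun _ _ h ↦ hH h) eH eG
    refine ⟨S, ⟨eH⟩, fun u hu v hv _ h ↦ ?_⟩
    have : (G.induce S).Adj ⟨u, hu⟩ ⟨v, hv⟩ := h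
    rwa [← hHG] at this
  · rintro ⟨S, ⟨eH⟩, hS⟩
    have hHG : H.induce S = G.induce S := by
      ext ⟨u, hu⟩ ⟨v, hv⟩
      exact ⟨fun h ↦ hH h, fun h ↦ hS hu hv (G.ne_of_adj h) h⟩
    exact ⟨S, ⟨eH⟩, ⟨hHG ▸ eH⟩⟩

theorem exists_isIndepSet_subset_of_degree_le [Fintype V] [DecidableEq V] {G : SimpleGraph V}
    [DecidableRel G.Adj] {d : ℕ} (hdeg : ∀ v, G.degree v ≤ d) (p : ℕ) (A : Finset V)
    (hA : p * (d + 1) ≤ #A) : ∃ t ⊆ A, #t = p ∧ G.IsIndepSet t := by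
  induction p generalizing A with
  | zero => exact ⟨∅, by simp⟩
  | succ p ih =>
    obtain ⟨a, ha⟩ : A.Nonempty := Finset.card_pos.mp (by nlinarith)
    have hclosed : #(insert a (G.neighborFinset a)) ≤ d + 1 :=
      (card_insert_le _ _).trans (by simpa using hdeg a)
    obtain ⟨t, htA, rfl, ht⟩ := ih (A \ insert a (G.neighborFinset a))
      (calc p * (d + 1) ≤ #A - (d + 1) := Nat.le_sub_of_add_le (by rwa [add_one_mul] at hA)
          _ ≤ #A - #(insert a (G.neighborFinset a)) := Nat.sub_le_sub_left hclosed _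
          _ ≤ _ := le_card_sdiff _ _)
    have hat : ∀ v ∈ t, v ≠ a ∧ ¬ G.Adj a v := fun v hv ↦ by
      simpa [not_or] using (mem_sdiff.mp (htA hv)).2
    refine ⟨insert a t, insert_subset ha fun v hv ↦ (mem_sdiff.mp (htA hv)).1, ?_, ?_⟩
    · rw [card_insert_of_notMem fun h ↦ (hat a h).1 rfl]
    · rw [coe_insert, IsIndepSet, Set.pairwise_insert]
      exact ⟨ht, fun v hv _ ↦ ⟨(hat v hv).2, fun h ↦ (hat v hv).2 h.symm⟩⟩

theorem exists_isIndepSet_disjoint_of_degree_le [Fintype V] [DecidableEq V] {G : SimpleGraph V}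
    [DecidableRel G.Adj] {d : ℕ} (hdeg : ∀ v, G.degree v ≤ d) (s : Finset V)
    (hs : ∀ u ∈ s, ∃ v ∈ s, G.Adj u v) (p : ℕ) (hcard : #s * d + p * (d + 1) ≤ Fintype.card V) :
    ∃ t : Finset V, #t = p ∧ G.IsIndepSet t ∧ Disjoint t s ∧ ∀ v ∈ t, ∀ u ∈ s, ¬ G.Adj v u := by
  set N := s.biUnion fun u ↦ G.neighborFinset u
  have hsN : s ⊆ N := fun u hu ↦ by
    obtain ⟨v, hv, huv⟩ := hs u hu
    exact mem_biUnion.mpr ⟨v, hv, (G.mem_neighborFinset v u).mpr huv.symm⟩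
  have hN : #N ≤ #s * d := card_biUnion_le_card_mul _ _ _ fun u _ ↦ hdeg u
  obtain ⟨t, htN, rfl, ht⟩ := exists_isIndepSet_subset_of_degree_le hdeg p (univ \ N)
    (by rw [card_sdiff_of_subset (subset_univ _), card_univ]; omega)
  have htN' : ∀ v ∈ t, v ∉ N := fun v hv ↦ (mem_sdiff.mp (htN hv)).2
  refine ⟨t, rfl, ht, Finset.disjoint_left.mpr fun _ hv hvs ↦ htN' _ hv (hsN hvs), ?_⟩
  exact fun v hv u hu huv ↦
    htN' v hv (mem_biUnion.mpr ⟨u, hu, (G.mem_neighborFinset u v).mpr huv.symm⟩)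

def sumInduceIsoInduceUnion {H : SimpleGraph V} {W S : Set V} [DecidablePred (· ∈ W)] (hWS : Disjoint W S)
    (hnadj : ∀ w ∈ W, ∀ s ∈ S, ¬ H.Adj w s) :
    H.induce W ⊕g H.induce S ≃g H.induce (W ∪ S) where
  toEquiv := (Equiv.Set.union hWS).symm
  map_rel_iff' := by
    rintro (⟨a, ha⟩ | ⟨a, ha⟩) (⟨b, hb⟩ | ⟨b, hb⟩)
    · simp
    · simpa using hnadj a ha b hb
    · simpa using fun h ↦ hnadj b hb a ha h.symm
    · simp

theorem exists_subset_induce_iso_of_embedding {W W' : Type*} {H : SimpleGraph V} {S : Set V}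
    {F : SimpleGraph W} {F' : SimpleGraph W'} (e : H.induce S ≃g F) (f : F' ↪g F) :
    ∃ T ⊆ S, Nonempty (H.induce T ≃g F') := by
  let g : F' ↪g H := (Embedding.induce S).comp (e.symm.toEmbedding.comp f)
  refine ⟨Set.range g, ?_, ⟨g.isoInduceRange.symm⟩⟩
  rintro _ ⟨x, rfl⟩
  exact (e.symm (f x)).2

theorem exists_induce_iso_bot_sum_of_degree_le [Fintype V] {G H : SimpleGraph V}
    [DecidableRel G.Adj] (hH : H ≤ G) {d : ℕ} (hdeg : ∀ v, G.degree v ≤ d) {W : Type*} [Fintype W]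
    (F : SimpleGraph W) (hF : ∀ x, ∃ y, F.Adj x y) {p : ℕ}
    (hcard : Fintype.card W * d + p * (d + 1) ≤ Fintype.card V) {S : Set V}
    (e : H.induce S ≃g F) (hS : S.Pairwise fun u v ↦ G.Adj u v → H.Adj u v) :
    ∃ T : Set V, Nonempty (H.induce T ≃g (⊥ : SimpleGraph (Fin p)) ⊕g F) ∧
      T.Pairwise fun u v ↦ G.Adj u v → H.Adj u v := by
  classical
  have hSadj : ∀ u ∈ S.toFinset, ∃ v ∈ S.toFinset, G.Adj u v := fun u hu ↦ by
    rw [Set.mem_toFinset] at hu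
    obtain ⟨y, hy⟩ := hF (e ⟨u, hu⟩)
    refine ⟨e.symm y, by simp, hH ?_⟩
    change (H.induce S).Adj ⟨u, hu⟩ (e.symm y)
    rwa [← e.map_adj_iff, e.apply_symm_apply]
  obtain ⟨t, rfl, ht, htS, htSadj⟩ := exists_isIndepSet_disjoint_of_degree_le hdeg S.toFinset
    hSadj p (by rwa [Set.toFinset_card, Fintype.card_congr e.toEquiv])
  have htbot : H.induce t = ⊥ := by
    ext ⟨u, hu⟩ ⟨v, hv⟩
    exact ⟨fun h ↦ ht hu hv (H.ne_of_adj h) (hH h), False.elim⟩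
  let et : (⊥ : SimpleGraph (Fin #t)) ≃g H.induce t :=
    ⟨t.equivFinOfCardEq rfl |>.symm, by simp [htbot]⟩
  refine ⟨t ∪ S, ⟨((et.sumCongr e.symm).trans (sumInduceIsoInduceUnion ?_ ?_)).symm⟩, ?_⟩
  · simpa [← Finset.disjoint_coe] using htS
  · exact fun w hw s hs h ↦ htSadj w hw s (by simpa) (hH h)
  · refine Set.pairwise_union.mpr ⟨fun u hu v hv huv h ↦ absurd h (ht hu hv huv), hS, ?_⟩
    intro u hu v hv _
    have huv : ¬ G.Adj u v := htSadj u hu v (by simpa)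
    exact ⟨fun h ↦ absurd h huv, fun h ↦ absurd h.symm huv⟩

end SimpleGraph

theorem stmt_9_general {V : Type*} [Fintype V] (G : SimpleGraph V) (p q k : ℕ)
    (hq : 2 ≤ q) (hqk : q ≤ k)
    (hdeg : ∀ v, (G.neighborSet v).ncard ≤ k - 1)
    (hcard : 2 * k * (k - 1) + p * k ≤ Fintype.card V)
    (H : SimpleGraph V) (hH : H ≤ G) :
    SatisfiesClosure G H (pK1qK2 p q) ↔ SatisfiesClosure G H (qK2graph q) := by
  classical
  obtain ⟨d, rfl⟩ : ∃ d, k = d + 1 := ⟨k - 1, by omega⟩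
  have hdeg' : ∀ v, G.degree v ≤ d := fun v ↦ by
    simpa [Set.ncard_eq_toFinset_card', ← neighborFinset_def] using hdeg v
  rw [pK1qK2_eq_sum, ← not_iff_not, not_satisfiesClosure_iff hH, not_satisfiesClosure_iff hH]
  constructor
  · rintro ⟨S, ⟨e⟩, hS⟩
    obtain ⟨T, hTS, hT⟩ := exists_subset_induce_iso_of_embedding e Embedding.sumInr
    exact ⟨T, hT, hS.mono hTS⟩
  · rintro ⟨S, ⟨e⟩, hS⟩
    refine exists_induce_iso_bot_sum_of_degree_le hH hdeg' _ qK2graph_exists_adj ?_ e hS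
    rw [Nat.add_sub_cancel] at hcard
    simp only [Fintype.card_prod, Fintype.card_fin]
    nlinarith

/-- Let `p ≥ 1`, `2 ≤ q ≤ k`, and let `G` be a graph with maximum degree at most `k − 1` and at
least `2k(k−1) + pk` vertices. Then a spanning subgraph `H` of `G` satisfies the
`(pK1 + qK2)`-closure iff `H` satisfies the `qK2`-closure. -/
theorem stmt_9 {V : Type*} [Fintype V] (G : SimpleGraph V) (p q k : ℕ)
    (hp : 1 ≤ p) (hq : 2 ≤ q) (hqk : q ≤ k)
    (hdeg : ∀ v, (G.neighborSet v).ncard ≤ k - 1)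
    (hcard : 2 * k * (k - 1) + p * k ≤ Fintype.card V)
    (H : SimpleGraph V) (hH : H ≤ G) :
    SatisfiesClosure G H (pK1qK2 p q) ↔ SatisfiesClosure G H (qK2graph q) :=
  stmt_9_general G p q k hq hqk hdeg hcard H hH
end

section
/- Let d be a positive integer, let G be a d-degenerate graph, let X ⊆ V(G), and let Y ⊆ V(G) \ X. Then the number of vertices of Y having at least d + 1 neighbors in X is at most binom(|X|, d+1) · d. -/
open SimpleGraph

/-- A graph `G` is `d`-degenerate if every nonempty (induced) subgraph of `G` has a vertex of
degree at most `d`: for every nonempty vertex subset `s` there is `v ∈ s` with at most `d`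
neighbors inside `s`. -/
def Degenerate {V : Type*} (G : SimpleGraph V) (d : ℕ) : Prop :=
  ∀ s : Set V, s.Nonempty → ∃ v ∈ s, (G.neighborSet v ∩ s).ncard ≤ d

/-!
Every vertex of `Y` with at least `d + 1` neighbours in `X` picks `d + 1` of them. A `d`-degenerate
graph contains no `K_{d+1,d+1}` (some vertex of it has at most `d` neighbours inside it), so each
`(d + 1)`-subset of `X` is picked by at most `d` vertices, and there are `binom(|X|, d+1)` such
subsets.
-/

open Finset

namespace Degenerate

variable {V : Type*} {G : SimpleGraph V} {d : ℕ}

theorem card_le_of_forall_adj (h : Degenerate G d) {S T : Finset V} (hS : d < #S)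
    (hST : ∀ y ∈ T, ∀ x ∈ S, G.Adj y x) : #T ≤ d := by
  obtain ⟨x₀, hx₀⟩ := card_pos.mp (d.zero_le.trans_lt hS)
  obtain ⟨v, hv, hvd⟩ := h (↑S ∪ ↑T) ⟨x₀, Or.inl hx₀⟩
  have hfin : (G.neighborSet v ∩ (↑S ∪ ↑T)).Finite :=
    (S.finite_toSet.union T.finite_toSet).subset Set.inter_subset_right
  rcases hv with hvS | hvT
  · have hT : (↑T : Set V) ⊆ G.neighborSet v ∩ (↑S ∪ ↑T) :=
      fun y hy => ⟨(hST y hy v hvS).symm, Or.inr hy⟩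
    simpa using (Set.ncard_le_ncard hT hfin).trans hvd
  · have hS' : (↑S : Set V) ⊆ G.neighborSet v ∩ (↑S ∪ ↑T) :=
      fun x hx => ⟨hST v hvT x hx, Or.inl hx⟩
    exact (hS.not_ge (by simpa using (Set.ncard_le_ncard hS' hfin).trans hvd)).elim

theorem card_le_choose_mul [DecidableRel G.Adj] (h : Degenerate G d) (X A : Finset V)
    (hA : ∀ y ∈ A, d < #{x ∈ X | G.Adj y x}) : #A ≤ (#X).choose (d + 1) * d := by
  classical
  have hpick : ∀ y ∈ A, ∃ S ∈ X.powersetCard (d + 1), ∀ x ∈ S, G.Adj y x := by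
    intro y hy
    obtain ⟨S, hSN, hSc⟩ := exists_subset_card_eq (hA y hy)
    exact ⟨S, mem_powersetCard.mpr ⟨hSN.trans (filter_subset _ _), hSc⟩,
      fun x hx => (mem_filter.mp (hSN hx)).2⟩
  choose! f hfX hfadj using hpick
  have hfiber : ∀ S ∈ X.powersetCard (d + 1), #{y ∈ A | f y = S} ≤ d := by
    intro S hS
    refine h.card_le_of_forall_adj (S := S) (by rw [(mem_powersetCard.mp hS).2]; omega) ?_
    intro y hy
    obtain ⟨hyA, rfl⟩ := mem_filter.mp hy
    exact hfadj y hyA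
  simpa [mul_comm] using card_le_mul_card_image_of_maps_to hfX d hfiber

end Degenerate

theorem stmt_10_general {V : Type*} [Fintype V] (G : SimpleGraph V) (d : ℕ)
    (hdeg : Degenerate G d) (X Y : Set V) :
    {y ∈ Y | d + 1 ≤ (G.neighborSet y ∩ X).ncard}.ncard ≤ (X.ncard).choose (d + 1) * d := by
  classical
  have hneighbors (y : V) :
      (G.neighborSet y ∩ X).ncard = #{x ∈ X.toFinset | G.Adj y x} := by
    rw [← Set.ncard_coe_finset]
    congr 1
    ext x
    simp [and_comm]
  rw [Set.ncard_eq_toFinset_card', Set.ncard_eq_toFinset_card' X]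
  refine hdeg.card_le_choose_mul _ _ fun y hy => ?_
  rw [← hneighbors]
  exact (Set.mem_toFinset.mp hy).2

/-- If `G` is `d`-degenerate, `X ⊆ V(G)` and `Y ⊆ V(G) \ X`, then the number of vertices of `Y`
having at least `d + 1` neighbors in `X` is at most `binom(|X|, d+1) · d`. -/
theorem stmt_10 {V : Type*} [Fintype V] (G : SimpleGraph V) (d : ℕ) (hd : 0 < d)
    (hdeg : Degenerate G d) (X Y : Set V) (hY : ∀ y ∈ Y, y ∉ X) :
    {y ∈ Y | d + 1 ≤ (G.neighborSet y ∩ X).ncard}.ncard ≤ (X.ncard).choose (d + 1) * d :=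
  stmt_10_general G d hdeg X Y
end

section
/- Let G be a graph, M a maximum matching of G, and T a triangle in G such that μ(G) ≥ 3 + μ(G − V(T)). Then no edge of M has both endpoints in T, and every vertex of T is covered by M. -/
open SimpleGraph

/-- The maximum matching number `μ(G)`: the greatest number of edges of a matching of `G`. -/
noncomputable def matchNum {V : Type*} (G : SimpleGraph V) : ℕ :=
  sSup {n | ∃ M : G.Subgraph, M.IsMatching ∧ M.edgeSet.ncard = n}

/-!
The edges of `M` that avoid a vertex set `S` form a matching of `G - S`, and at most `|S|` edges
of `M` meet `S`, one per vertex. If `M` had an edge inside `T`, or left a vertex of `T` uncovered,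
only two edges of `M` would meet `T`, so `μ(G - V(T)) ≥ μ(G) - 2`.
-/

namespace SimpleGraph.Subgraph

variable {V : Type*} {G : SimpleGraph V} {M : G.Subgraph}

def toInduce (M : G.Subgraph) (s : Set V) : (G.induce s).Subgraph where
  verts := {v | ∃ w : s, M.Adj v w}
  Adj u w := M.Adj u w
  adj_sub h := M.adj_sub h
  edge_vert {_ w} h := ⟨w, h⟩
  symm := ⟨fun _ _ h => M.adj_symm h⟩

theorem IsMatching.toInduce (hM : M.IsMatching) (s : Set V) : (M.toInduce s).IsMatching := by
  rintro v ⟨w, hw⟩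
  exact ⟨w, hw, fun w' hw' => Subtype.ext (hM.eq_of_adj_left hw' hw)⟩

theorem image_edgeSet_toInduce (s : Set V) :
    Sym2.map (↑) '' (M.toInduce s).edgeSet = M.edgeSet ∩ s.sym2 := by
  ext e
  induction e with
  | h u w =>
    constructor
    · rintro ⟨e', he', hmap⟩
      induction e' with
      | h u' w' =>
        rw [Sym2.map_mk] at hmap
        rw [← hmap]
        exact ⟨he', u'.2, w'.2⟩
    · rintro ⟨huw, hu, hw⟩
      exact ⟨s(⟨u, hu⟩, ⟨w, hw⟩), huw, rfl⟩

theorem ncard_edgeSet_toInduce (s : Set V) :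
    (M.toInduce s).edgeSet.ncard = (M.edgeSet ∩ s.sym2).ncard := by
  rw [← image_edgeSet_toInduce, Set.ncard_image_of_injective _
    (Sym2.map.injective Subtype.val_injective)]

theorem IsMatching.ncard_edgeSet_le_matchNum [Finite V] (hM : M.IsMatching) :
    M.edgeSet.ncard ≤ matchNum G := by
  refine le_csSup ⟨Nat.card (Sym2 V), ?_⟩ ⟨M, hM, rfl⟩
  rintro n ⟨N, -, rfl⟩
  exact (Set.ncard_le_ncard (Set.subset_univ _)).trans (Set.ncard_univ _).le

theorem IsMatching.ncard_edgeSet_diff_sym2_compl_le (hM : M.IsMatching) {S : Set V}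
    (hS : S.Finite) : (M.edgeSet \ Sᶜ.sym2).ncard ≤ S.ncard := by
  classical
  let matchEdge : V → Sym2 V := fun v =>
    if h : ∃ w, M.Adj v w then s(v, h.choose) else s(v, v)
  have matchEdge_eq {v w : V} (hvw : M.Adj v w) : matchEdge v = s(v, w) := by
    have h : ∃ w, M.Adj v w := ⟨w, hvw⟩
    simp only [matchEdge, dif_pos h, hM.eq_of_adj_left h.choose_spec hvw]
  refine (Set.ncard_le_ncard ?_ (hS.image matchEdge)).trans (Set.ncard_image_le hS)
  rintro e ⟨he, hmeet⟩
  induction e with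
  | h u w =>
    rw [Set.mk_mem_sym2_iff, not_and_or, Set.notMem_compl_iff, Set.notMem_compl_iff] at hmeet
    rcases hmeet with hu | hw
    · exact ⟨u, hu, matchEdge_eq he⟩
    · exact ⟨w, hw, (matchEdge_eq (M.adj_symm he)).trans Sym2.eq_swap⟩

/-- `hzS` covers both an unmatched `z` and a `z` matched inside `S`; either way `z` adds no edge
of its own to those meeting `S`. -/
theorem IsMatching.ncard_edgeSet_diff_sym2_compl_lt (hM : M.IsMatching) {S : Set V}
    (hS : S.Finite) {z : V} (hz : z ∈ S) (hzS : ∀ w, M.Adj z w → w ∈ S) :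
    (M.edgeSet \ Sᶜ.sym2).ncard < S.ncard := by
  have hmeet_diff {u w : V} (huw : M.Adj u w) (hu : u ∈ S) : u ∈ S \ {z} ∨ w ∈ S \ {z} := by
    by_cases huz : u = z
    · subst huz
      exact .inr ⟨hzS w huw, (M.adj_sub huw).ne.symm⟩
    · exact .inl ⟨hu, huz⟩
  have hsame : M.edgeSet \ Sᶜ.sym2 = M.edgeSet \ (S \ {z})ᶜ.sym2 := by
    refine subset_antisymm ?_ (Set.sdiff_subset_sdiff_right ?_)
    · rintro e ⟨he, hmeet⟩
      refine ⟨he, ?_⟩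
      induction e with
      | h u w =>
        simp only [Set.mk_mem_sym2_iff, not_and_or, Set.notMem_compl_iff] at hmeet ⊢
        rcases hmeet with hu | hw
        · exact hmeet_diff he hu
        · exact (hmeet_diff (M.adj_symm he) hw).symm
    · exact fun e he => Set.mem_sym2_iff_subset.2 <|
        (Set.mem_sym2_iff_subset.1 he).trans (Set.compl_subset_compl.2 Set.sdiff_subset)
  calc (M.edgeSet \ Sᶜ.sym2).ncard = (M.edgeSet \ (S \ {z})ᶜ.sym2).ncard := by rw [hsame]
    _ ≤ (S \ {z}).ncard := hM.ncard_edgeSet_diff_sym2_compl_le hS.sdiff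
    _ < S.ncard := Set.ncard_sdiff_singleton_lt_of_mem hz hS

theorem IsMatching.ncard_edgeSet_le_add_matchNum_induce_compl [Finite V] (hM : M.IsMatching)
    (S : Set V) : M.edgeSet.ncard ≤ (M.edgeSet \ Sᶜ.sym2).ncard + matchNum (G.induce Sᶜ) :=
  calc M.edgeSet.ncard = (M.toInduce Sᶜ).edgeSet.ncard + (M.edgeSet \ Sᶜ.sym2).ncard := by
        rw [ncard_edgeSet_toInduce, Set.ncard_inter_add_ncard_sdiff_eq_ncard]
    _ ≤ (M.edgeSet \ Sᶜ.sym2).ncard + matchNum (G.induce Sᶜ) := by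
        rw [add_comm]
        exact Nat.add_le_add_left (hM.toInduce Sᶜ).ncard_edgeSet_le_matchNum _

theorem IsMatching.matchNum_lt_ncard_add_matchNum_induce_compl [Finite V] (hM : M.IsMatching)
    (hmax : M.edgeSet.ncard = matchNum G) {S : Set V} {z : V} (hz : z ∈ S)
    (hzS : ∀ w, M.Adj z w → w ∈ S) : matchNum G < S.ncard + matchNum (G.induce Sᶜ) :=
  calc matchNum G ≤ (M.edgeSet \ Sᶜ.sym2).ncard + matchNum (G.induce Sᶜ) :=
        hmax ▸ hM.ncard_edgeSet_le_add_matchNum_induce_compl S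
    _ < S.ncard + matchNum (G.induce Sᶜ) :=
        Nat.add_lt_add_right (hM.ncard_edgeSet_diff_sym2_compl_lt S.toFinite hz hzS) _

end SimpleGraph.Subgraph

theorem stmt_12_general {V : Type*} [Fintype V] (G : SimpleGraph V)
    (M : G.Subgraph) (hM : M.IsMatching) (hmax : M.edgeSet.ncard = matchNum G)
    (a b c : V)
    (hmu : 3 + matchNum (G.induce {x | x ∉ ({a, b, c} : Set V)}) ≤ matchNum G) :
    (∀ x y, M.Adj x y → ¬ (x ∈ ({a, b, c} : Set V) ∧ y ∈ ({a, b, c} : Set V))) ∧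
    a ∈ M.support ∧ b ∈ M.support ∧ c ∈ M.support := by
  have hcard : ({a, b, c} : Set V).ncard ≤ 3 :=
    (Set.ncard_insert_le _ _).trans <| Nat.succ_le_succ <|
      (Set.ncard_insert_le _ _).trans (by rw [Set.ncard_singleton])
  have absurd_of_partners_mem {z : V} (hz : z ∈ ({a, b, c} : Set V))
      (hzS : ∀ w, M.Adj z w → w ∈ ({a, b, c} : Set V)) : False :=
    (hM.matchNum_lt_ncard_add_matchNum_induce_compl hmax hz hzS).not_ge
      ((Nat.add_le_add_right hcard _).trans hmu)
  have mem_support {z : V} (hz : z ∈ ({a, b, c} : Set V)) : z ∈ M.support := by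
    by_contra hzM
    exact absurd_of_partners_mem hz fun w hzw => (hzM ⟨w, hzw⟩).elim
  refine ⟨fun x y hxy ⟨hx, hy⟩ => absurd_of_partners_mem hx fun w hxw => ?_,
    mem_support (by simp), mem_support (by simp), mem_support (by simp)⟩
  rwa [hM.eq_of_adj_left hxw hxy]

/-- Let `M` be a maximum matching of `G` and let `T = {a, b, c}` be a triangle of `G` such that
`μ(G) ≥ 3 + μ(G − V(T))`. Then no edge of `M` has both endpoints in `T`, and every vertex of `T`
is covered by `M`. -/
theorem stmt_12 {V : Type*} [Fintype V] (G : SimpleGraph V)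
    (M : G.Subgraph) (hM : M.IsMatching) (hmax : M.edgeSet.ncard = matchNum G)
    (a b c : V) (hab : G.Adj a b) (hbc : G.Adj b c) (hac : G.Adj a c)
    (hmu : 3 + matchNum (G.induce {x | x ∉ ({a, b, c} : Set V)}) ≤ matchNum G) :
    (∀ x y, M.Adj x y → ¬ (x ∈ ({a, b, c} : Set V) ∧ y ∈ ({a, b, c} : Set V))) ∧
    a ∈ M.support ∧ b ∈ M.support ∧ c ∈ M.support :=
  stmt_12_general G M hM hmax a b c hmu
end

section
/- Let t ≥ 3 be an integer, let G be a graph, let M be an induced matching in G, and let v be a vertex of G not covered by M. If H is a spanning subgraph of G satisfying the K_{1,t}-closure, then v has at most 2t − 2 neighbors in H among the endpoints of the edges of M. -/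
open SimpleGraph

/-- The star `K_{1,t}`: the center `none` is adjacent to the `t` leaves `some i`. -/
def K1t (t : ℕ) : SimpleGraph (Option (Fin t)) :=
  SimpleGraph.fromRel (fun a b => a = none ∧ b ≠ none)

/-!
Inside `M.verts` every vertex has at most one `G`-neighbour, because `M` is an induced matching.
Hence a greedy choice (keep a vertex, discard its neighbour) extracts from the `H`-neighbours of `v`
in `M.verts` a `G`-independent set `L` containing at least half of them. Together with `v`, the
set `L` spans a star both in `H` and in `G` (as `H ≤ G`), so the `K_{1,t}`-closure forces
`#L < t`.
-/

namespace SimpleGraph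

variable {V : Type*}

lemma exists_isIndepSet_subset_two_mul_card_ge (G : SimpleGraph V) (N : Finset V)
    (hN : ∀ x ∈ N, (G.neighborSet x ∩ N).Subsingleton) :
    ∃ L ⊆ N, G.IsIndepSet L ∧ N.card ≤ 2 * L.card := by
  classical
  induction N using Finset.strongInduction with
  | H N ih =>
    obtain rfl | ⟨x, hx⟩ := N.eq_empty_or_nonempty
    · exact ⟨∅, subset_rfl, by simp, by simp⟩
    set N' := N.filter fun y ↦ y ≠ x ∧ ¬ G.Adj x y
    have hN'N : N' ⊆ N := Finset.filter_subset _ _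
    have hcard : N.card ≤ N'.card + 2 := by
      have hnbr : (N.filter (G.Adj x)).card ≤ 1 :=
        Finset.card_le_one.2 fun y hy z hz ↦ hN x hx (by simp_all) (by simp_all)
      have : N ⊆ N' ∪ (insert x (N.filter (G.Adj x))) := by
        intro y hy
        by_cases hyx : y = x <;> by_cases hxy : G.Adj x y <;> simp [N', *]
      calc N.card ≤ (N' ∪ insert x (N.filter (G.Adj x))).card := Finset.card_le_card this
        _ ≤ N'.card + (N.filter (G.Adj x)).card + 1 :=
          (Finset.card_union_le _ _).trans (by grind [Finset.card_insert_le])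
        _ ≤ N'.card + 2 := by omega
    have hxN' : x ∉ N' := by simp [N']
    obtain ⟨L, hLN', hL, hLcard⟩ :=
      ih N' (Finset.ssubset_iff_subset_ne.2 ⟨hN'N, fun h ↦ hxN' (h ▸ hx)⟩)
        fun y hy ↦ (hN y (hN'N hy)).anti (Set.inter_subset_inter_right _ (by simpa using hN'N))
    have hxL : x ∉ L := fun h ↦ hxN' (hLN' h)
    refine ⟨insert x L, Finset.insert_subset hx (hLN'.trans hN'N), ?_, ?_⟩
    · rw [Finset.coe_insert, isIndepSet_iff, Set.pairwise_insert]
      refine ⟨hL, fun y hy _ ↦ ?_⟩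
      have : ¬ G.Adj x y := by simpa [N'] using (Finset.mem_filter.1 (hLN' hy)).2.2
      exact ⟨this, fun h ↦ this h.symm⟩
    · rw [Finset.card_insert_of_notMem hxL]
      omega

lemma Subgraph.IsMatching.subsingleton_neighborSet_inter_verts {G : SimpleGraph V}
    {M : G.Subgraph} (hM : M.IsMatching) (hind : M.IsInduced) {x : V} (hx : x ∈ M.verts) :
    (G.neighborSet x ∩ M.verts).Subsingleton := fun _ hy _ hz ↦
  hM.eq_of_adj_left (hind hx hy.2 hy.1) (hind hx hz.2 hz.1)

end SimpleGraph

section Star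

variable {V : Type*}

@[simp]
lemma K1t_adj {t : ℕ} {a b : Option (Fin t)} :
    (K1t t).Adj a b ↔ a ≠ b ∧ (a = none ∨ b = none) := by
  cases a <;> cases b <;> simp [K1t]

def starEmbedding {t : ℕ} (G : SimpleGraph V) (c : V) (f : Fin t ↪ V)
    (hc : ∀ i, G.Adj c (f i)) (hf : ∀ i j, ¬ G.Adj (f i) (f j)) : K1t t ↪g G where
  toFun o := o.elim c f
  inj' := by
    rintro (_ | i) (_ | j) h
    · rfl
    · exact absurd h (hc j).ne
    · exact absurd h.symm (hc i).ne
    · exact congrArg some (f.injective h)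
  map_rel_iff' := by
    rintro (_ | i) (_ | j)
    · simp
    · exact iff_of_true (hc j) (by simp)
    · exact iff_of_true (hc i).symm (by simp)
    · exact iff_of_false (hf i j) (by simp)

lemma SatisfiesClosure.not_star {t : ℕ} {G H : SimpleGraph V} (hH : H ≤ G)
    (hcl : SatisfiesClosure G H (K1t t)) (c : V) (f : Fin t ↪ V)
    (hc : ∀ i, H.Adj c (f i)) (hf : ∀ i j, ¬ G.Adj (f i) (f j)) : False :=
  hcl _ ⟨(starEmbedding H c f hc fun i j h ↦ hf i j (hH h)).isoInduceRange.symm⟩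
    ⟨(starEmbedding G c f (fun i ↦ hH (hc i)) hf).isoInduceRange.symm⟩

lemma SatisfiesClosure.card_lt_of_isIndepSet {t : ℕ} {G H : SimpleGraph V} (hH : H ≤ G)
    (hcl : SatisfiesClosure G H (K1t t)) {c : V} {L : Finset V}
    (hLc : ↑L ⊆ H.neighborSet c) (hL : G.IsIndepSet L) : L.card < t := by
  by_contra! htL
  let f : Fin t ↪ V :=
    (Fin.castLEEmb htL).trans (L.equivFin.symm.toEmbedding.trans (Function.Embedding.subtype _))
  have hfL (i : Fin t) : f i ∈ L := (L.equivFin.symm _).2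
  refine hcl.not_star hH c f (fun i ↦ hLc (hfL i)) fun i j hij ↦ ?_
  exact hL (hfL i) (hfL j) hij.ne hij

end Star

theorem stmt_15_general {V : Type*} (G : SimpleGraph V) (t : ℕ)
    (M : G.Subgraph) (hM : M.IsMatching)
    (hind : ∀ x ∈ M.verts, ∀ y ∈ M.verts, G.Adj x y → M.Adj x y)
    (v : V)
    (H : SimpleGraph V) (hH : H ≤ G) (hcl : SatisfiesClosure G H (K1t t)) :
    (H.neighborSet v ∩ M.verts).ncard ≤ 2 * t - 2 := by
  obtain hinf | hfin := (H.neighborSet v ∩ M.verts).infinite_or_finite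
  · simp [hinf.ncard]
  have hMind : M.IsInduced := fun _ ha _ hb ↦ hind _ ha _ hb
  obtain ⟨L, hLN, hL, hcard⟩ := G.exists_isIndepSet_subset_two_mul_card_ge hfin.toFinset
    fun x hx ↦ (hM.subsingleton_neighborSet_inter_verts hMind (hfin.mem_toFinset.1 hx).2).anti
      (Set.inter_subset_inter_right _ (by simp))
  have hLt : L.card < t := hcl.card_lt_of_isIndepSet hH
    (fun x hx ↦ (hfin.mem_toFinset.1 (hLN hx)).1) hL
  rw [Set.ncard_eq_toFinset_card _ hfin]
  omega

/-- Let `t ≥ 3`, let `M` be an induced matching in `G` and let `v` be a vertex not covered by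
`M`. If `H` is a spanning subgraph of `G` satisfying the `K_{1,t}`-closure, then `v` has at most
`2t − 2` neighbors in `H` among the endpoints of the edges of `M`. -/
theorem stmt_15 {V : Type*} [Fintype V] (G : SimpleGraph V) (t : ℕ) (ht : 3 ≤ t)
    (M : G.Subgraph) (hM : M.IsMatching)
    (hind : ∀ x ∈ M.verts, ∀ y ∈ M.verts, G.Adj x y → M.Adj x y)
    (v : V) (hv : v ∉ M.verts)
    (H : SimpleGraph V) (hH : H ≤ G) (hcl : SatisfiesClosure G H (K1t t)) :
    (H.neighborSet v ∩ M.verts).ncard ≤ 2 * t - 2 :=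
  stmt_15_general G t M hM hind v H hH hcl
end

section
/- Let X be a set of 3q elements and let C be a collection of m triplets (3-element subsets) of X. Construct the graph G' as follows: its vertices are the elements of X, and for each triplet t ∈ C and each element x ∈ t, the vertices t_x, a^t_x and b^t_x; its edges are, for each triplet t = {x, y, z} ∈ C, the triangle on {t_x, t_y, t_z} (middle triangle), and for each x ∈ t the triangle on {t_x, a^t_x, b^t_x} (inner triangle) and the triangle on {a^t_x, b^t_x, x} (outer triangle). Then C contains an exact cover of X (a subcollection of pairwise disjoint triplets whose union is X) if and only if G' has a spanning subgraph H satisfying the P3-closure with |E(H)| ≥ 9m + 3q. -/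
/-!
Every clique of `G'` has at most three vertices. If `H` satisfies the P3-closure, any two
`H`-neighbours of a vertex are adjacent in `G'`, so three of them would span a `K₄` with it;
hence `H` has maximum degree two and, by the handshake lemma, `|E(H)| ≤ |V(G')| = 9m + 3q`,
with equality only if `H` is 2-regular.

An exact cover gives such an `H`: the middle and outer triangles of the chosen triplets and the
inner triangles of the others partition `V(G')`. Conversely, in a 2-regular `H` with the closure
property each element `x` has its two neighbours in the outer triangle of some `t ∋ x`. Then
`t_x` cannot use its inner triangle, so its neighbours are the other two middle vertices of `t`;
these in turn lose their inner triangles, which forces every outer triangle of `t`. The triplets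
all of whose outer triangles lie in `H` therefore form an exact cover.
-/

open SimpleGraph

/-- The path on three vertices `0 - 1 - 2`. -/
def P3 : SimpleGraph (Fin 3) :=
  SimpleGraph.fromRel (fun a b => (a = 0 ∧ b = 1) ∨ (a = 1 ∧ b = 2))

/-- The graph `G'` of the reduction from Planar X3C. Its vertices are the elements of
`X = Fin (3*q)` (the vertices `Sum.inl x`), together with, for every triplet `t : Fin m` and
every element `x ∈ C t` (encoded as a subtype pair `p`), the three vertices `t_x = (p, 0)`,
`a^t_x = (p, 1)` and `b^t_x = (p, 2)` (the vertices `Sum.inr (p, j)`). Its edges are, for each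
triplet `t = {x, y, z}`, the middle triangle on `{t_x, t_y, t_z}` and, for each `x ∈ t`, the
inner triangle on `{t_x, a^t_x, b^t_x}` and the outer triangle on `{a^t_x, b^t_x, x}`. -/
def xcGraph (q m : ℕ) (C : Fin m → Finset (Fin (3 * q))) :
    SimpleGraph (Fin (3 * q) ⊕ ({pr : Fin m × Fin (3 * q) // pr.2 ∈ C pr.1} × Fin 3)) :=
  SimpleGraph.fromRel (fun a b =>
    match a, b with
    | Sum.inr (p, j), Sum.inr (p', j') => (p.1.1 = p'.1.1 ∧ j = 0 ∧ j' = 0) ∨ p = p'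
    | Sum.inl x, Sum.inr (p, j) => x = p.1.2 ∧ j ≠ 0
    | _, _ => False)

section Closure

variable {V : Type*}

lemma P3_adj_zero_one : P3.Adj 0 1 := by simp [P3, fromRel_adj]

lemma P3_adj_one_two : P3.Adj 1 2 := by simp [P3, fromRel_adj]

lemma P3_not_adj_zero_two : ¬ P3.Adj 0 2 := by simp [P3, fromRel_adj]

lemma nonempty_induce_range_iso_P3 {K : SimpleGraph V} {u v w : V}
    (huv : K.Adj u v) (hvw : K.Adj v w) (huw : ¬ K.Adj u w) (hne : u ≠ w) :
    Nonempty (K.induce (Set.range ![u, v, w]) ≃g P3) := by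
  have hinj : Function.Injective ![u, v, w] := by
    intro i j h
    fin_cases i <;> fin_cases j <;> simp_all [huv.ne, hvw.ne, huv.ne.symm, hvw.ne.symm, hne.symm]
  let f : P3 ↪g K := ⟨⟨![u, v, w], hinj⟩, by
    intro i j
    fin_cases i <;> fin_cases j <;>
      simp [P3, fromRel_adj, huv, hvw, huw, huv.symm, hvw.symm, mt K.adj_symm huw]⟩
  exact ⟨f.isoInduceRange.symm⟩

lemma satisfiesClosure_of_adj_trans {G H : SimpleGraph V}
    (htrans : ∀ a b c, H.Adj a b → H.Adj b c → a ≠ c → H.Adj a c) :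
    SatisfiesClosure G H P3 := by
  rintro S ⟨φ⟩ -
  have h01 := φ.symm.map_adj_iff.2 P3_adj_zero_one
  have h12 := φ.symm.map_adj_iff.2 P3_adj_one_two
  have hne : (φ.symm 0 : V) ≠ φ.symm 2 := by simp [Subtype.val_inj]
  exact P3_not_adj_zero_two (φ.symm.map_adj_iff.1 (htrans _ _ _ h01 h12 hne))

variable {G H : SimpleGraph V}

theorem SatisfiesClosure.adj_of_adj_of_adj (hcl : SatisfiesClosure G H P3) (hle : H ≤ G)
    {u v w : V} (hu : H.Adj v u) (hw : H.Adj v w) (huw : u ≠ w) : G.Adj u w := by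
  by_contra hG
  exact hcl _ (nonempty_induce_range_iso_P3 hu.symm hw (fun h => hG (hle h)) huw)
    (nonempty_induce_range_iso_P3 (hle hu.symm) (hle hw) hG huw)

theorem SatisfiesClosure.degree_le_two (hcl : SatisfiesClosure G H P3) (hle : H ≤ G)
    (hG : G.CliqueFree 4) (v : V) [Fintype (H.neighborSet v)] : H.degree v ≤ 2 := by
  classical
  by_contra! h
  obtain ⟨a, ha, b, hb, c, hc, hab, hac, hbc⟩ := Finset.two_lt_card.1 h
  simp only [mem_neighborFinset] at ha hb hc
  have habc : G.IsNClique 3 {a, b, c} := is3Clique_triple_iff.2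
    ⟨hcl.adj_of_adj_of_adj hle ha hb hab, hcl.adj_of_adj_of_adj hle ha hc hac,
      hcl.adj_of_adj_of_adj hle hb hc hbc⟩
  refine hG _ (habc.insert (a := v) ?_)
  simp only [Finset.mem_insert, Finset.mem_singleton]
  rintro _ (rfl | rfl | rfl) <;> exact hle ‹_›

end Closure

section Handshake

variable {V : Type*} [Fintype V] (H : SimpleGraph V) [DecidableRel H.Adj]

lemma ncard_edgeSet_eq_card_edgeFinset : H.edgeSet.ncard = H.edgeFinset.card := by
  rw [← coe_edgeFinset, Set.ncard_coe_finset]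

theorem card_le_ncard_edgeSet_of_two_le_degree (h : ∀ v, 2 ≤ H.degree v) :
    Fintype.card V ≤ H.edgeSet.ncard := by
  have := Finset.sum_le_sum fun v (_ : v ∈ Finset.univ) => h v
  rw [sum_degrees_eq_twice_card_edges, Finset.sum_const, Finset.card_univ, smul_eq_mul] at this
  rw [ncard_edgeSet_eq_card_edgeFinset]
  omega

theorem degree_eq_two_of_card_le_ncard_edgeSet (hdeg : ∀ v, H.degree v ≤ 2)
    (hcard : Fintype.card V ≤ H.edgeSet.ncard) (v : V) : H.degree v = 2 := by
  refine (hdeg v).antisymm (not_lt.1 fun hv => ?_)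
  have := Finset.sum_lt_sum (fun w (_ : w ∈ Finset.univ) => hdeg w) ⟨v, Finset.mem_univ v, hv⟩
  rw [sum_degrees_eq_twice_card_edges, Finset.sum_const, Finset.card_univ, smul_eq_mul] at this
  rw [ncard_edgeSet_eq_card_edgeFinset] at hcard
  omega

lemma two_le_degree_of_adj {v u w : V} (hu : H.Adj v u) (hw : H.Adj v w) (huw : u ≠ w) :
    2 ≤ H.degree v :=
  Finset.one_lt_card_iff.2 ⟨u, w, by simpa, by simpa, huw⟩

lemma exists_adj_ne_of_two_le_degree {v : V} (hv : 2 ≤ H.degree v) (z : V) :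
    ∃ u, u ≠ z ∧ H.Adj v u := by
  obtain ⟨u, hu, huz⟩ := Finset.exists_mem_ne (s := H.neighborFinset v) hv z
  exact ⟨u, huz, (mem_neighborFinset _ _ _).1 hu⟩

end Handshake

lemma Finset.exists_ne_ne_of_card_eq_three {α : Type*} [DecidableEq α] {s : Finset α} {a : α}
    (hs : s.card = 3) (ha : a ∈ s) : ∃ b ∈ s, ∃ c ∈ s, b ≠ a ∧ c ≠ a ∧ b ≠ c := by
  obtain ⟨b, c, hbc, he⟩ := Finset.card_eq_two.1 (by rw [Finset.card_erase_of_mem ha, hs])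
  have hb : b ∈ s.erase a := he ▸ by simp
  have hc : c ∈ s.erase a := he ▸ by simp
  exact ⟨b, Finset.mem_of_mem_erase hb, c, Finset.mem_of_mem_erase hc, Finset.ne_of_mem_erase hb,
    Finset.ne_of_mem_erase hc, hbc⟩

abbrev XCIncidence (q m : ℕ) (C : Fin m → Finset (Fin (3 * q))) :=
  {pr : Fin m × Fin (3 * q) // pr.2 ∈ C pr.1}

abbrev XCVertex (q m : ℕ) (C : Fin m → Finset (Fin (3 * q))) :=
  Fin (3 * q) ⊕ (XCIncidence q m C × Fin 3)

namespace xcGraph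

variable {q m : ℕ} {C : Fin m → Finset (Fin (3 * q))}

@[simp] lemma not_adj_inl_inl {x y : Fin (3 * q)} :
    ¬ (xcGraph q m C).Adj (Sum.inl x) (Sum.inl y) := by
  simp [xcGraph, fromRel_adj]

@[simp] lemma adj_inl_inr {x : Fin (3 * q)} {p : XCIncidence q m C} {j : Fin 3} :
    (xcGraph q m C).Adj (Sum.inl x) (Sum.inr (p, j)) ↔ x = p.1.2 ∧ j ≠ 0 := by
  simp [xcGraph, fromRel_adj]

@[simp] lemma adj_inr_inl {x : Fin (3 * q)} {p : XCIncidence q m C} {j : Fin 3} :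
    (xcGraph q m C).Adj (Sum.inr (p, j)) (Sum.inl x) ↔ x = p.1.2 ∧ j ≠ 0 := by
  rw [adj_comm, adj_inl_inr]

lemma adj_inr_inr {p p' : XCIncidence q m C} {j j' : Fin 3} :
    (xcGraph q m C).Adj (Sum.inr (p, j)) (Sum.inr (p', j')) ↔
      (p, j) ≠ (p', j') ∧ ((p.1.1 = p'.1.1 ∧ j = 0 ∧ j' = 0) ∨ p = p') := by
  simp only [xcGraph, fromRel_adj, ne_eq, Sum.inr.injEq]
  constructor
  · rintro ⟨hne, (⟨h₁, h₂, h₃⟩ | h) | (⟨h₁, h₂, h₃⟩ | h)⟩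
    exacts [⟨hne, .inl ⟨h₁, h₂, h₃⟩⟩, ⟨hne, .inr h⟩, ⟨hne, .inl ⟨h₁.symm, h₃, h₂⟩⟩,
      ⟨hne, .inr h.symm⟩]
  · rintro ⟨hne, h⟩
    exact ⟨hne, .inl h⟩

lemma eq_of_adj_inr_inr {p p' : XCIncidence q m C} {j j' : Fin 3}
    (h : (xcGraph q m C).Adj (Sum.inr (p, j)) (Sum.inr (p', j'))) (hj : j ≠ 0) : p = p' := by
  rcases (adj_inr_inr.1 h).2 with ⟨-, hj', -⟩ | rfl
  exacts [absurd hj' hj, rfl]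

lemma exists_eq_of_adj_inl {x : Fin (3 * q)} {z} (h : (xcGraph q m C).Adj (Sum.inl x) z) :
    ∃ (p : XCIncidence q m C) (j : Fin 3), z = Sum.inr (p, j) ∧ p.1.2 = x ∧ j ≠ 0 := by
  rcases z with y | ⟨p, j⟩
  · exact absurd h not_adj_inl_inl
  · obtain ⟨rfl, hj⟩ := adj_inl_inr.1 h
    exact ⟨p, j, rfl, rfl, hj⟩

lemma eq_of_adj_inr_of_ne_zero {p : XCIncidence q m C} {j : Fin 3} {z} (hj : j ≠ 0)
    (h : (xcGraph q m C).Adj (Sum.inr (p, j)) z) :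
    z = Sum.inl p.1.2 ∨ ∃ j', j' ≠ j ∧ z = Sum.inr (p, j') := by
  rcases z with y | ⟨p', j'⟩
  · exact .inl (by rw [(adj_inr_inl.1 h).1])
  · obtain rfl := eq_of_adj_inr_inr h hj
    exact .inr ⟨j', fun hj' => (adj_inr_inr.1 h).1 (by rw [hj']), rfl⟩

lemma eq_of_adj_inr_zero {p : XCIncidence q m C} {z} (h : (xcGraph q m C).Adj (Sum.inr (p, 0)) z) :
    (∃ j, j ≠ 0 ∧ z = Sum.inr (p, j)) ∨
      ∃ p' : XCIncidence q m C, p' ≠ p ∧ p'.1.1 = p.1.1 ∧ z = Sum.inr (p', 0) := by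
  rcases z with y | ⟨p', j'⟩
  · exact absurd (adj_inr_inl.1 h).2 (not_not.2 rfl)
  · obtain ⟨hne, ⟨ht, -, rfl⟩ | rfl⟩ := adj_inr_inr.1 h
    · exact .inr ⟨p', fun h => hne (by rw [h]), ht.symm, rfl⟩
    · exact .inl ⟨j', fun h => hne (by rw [h]), rfl⟩

lemma eq_or_eq_or_eq_of_fst_eq (hC : ∀ i, (C i).card = 3) {p r₁ r₂ s : XCIncidence q m C}
    (h₁ : r₁.1.1 = p.1.1) (h₂ : r₂.1.1 = p.1.1) (hs : s.1.1 = p.1.1)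
    (hp₁ : p ≠ r₁) (hp₂ : p ≠ r₂) (h₁₂ : r₁ ≠ r₂) : s = p ∨ s = r₁ ∨ s = r₂ := by
  have ext : ∀ a b : XCIncidence q m C, a.1.1 = b.1.1 → a.1.2 = b.1.2 → a = b :=
    fun a b h h' => Subtype.ext (Prod.ext h h')
  have hsub : {p.1.2, r₁.1.2, r₂.1.2} ⊆ C p.1.1 := by
    simp only [Finset.insert_subset_iff, Finset.singleton_subset_iff]
    exact ⟨p.2, h₁ ▸ r₁.2, h₂ ▸ r₂.2⟩
  have hcard : (C p.1.1).card ≤ ({p.1.2, r₁.1.2, r₂.1.2} : Finset _).card := by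
    rw [hC, Finset.card_eq_three.2 ⟨_, _, _, fun h => hp₁ (ext _ _ h₁.symm h),
      fun h => hp₂ (ext _ _ h₂.symm h), fun h => h₁₂ (ext _ _ (h₁.trans h₂.symm) h), rfl⟩]
  have hmem : s.1.2 ∈ ({p.1.2, r₁.1.2, r₂.1.2} : Finset _) :=
    Finset.eq_of_subset_of_card_le hsub hcard ▸ hs ▸ s.2
  simp only [Finset.mem_insert, Finset.mem_singleton] at hmem
  rcases hmem with h | h | h
  exacts [.inl (ext _ _ hs h), .inr (.inl (ext _ _ (hs.trans h₁.symm) h)),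
    .inr (.inr (ext _ _ (hs.trans h₂.symm) h))]

lemma card_le_three_of_inr_mem {s : Finset (XCVertex q m C)}
    (hs : (xcGraph q m C).IsClique (s : Set _))
    {p : XCIncidence q m C} {j : Fin 3} (hp : Sum.inr (p, j) ∈ s) (hj : j ≠ 0) :
    s.card ≤ 3 := by
  have hgadget : ∀ b ∈ s, b = Sum.inl p.1.2 ∨ ∃ j', b = Sum.inr (p, j') := by
    intro b hb
    by_cases hbp : b = Sum.inr (p, j)
    · exact .inr ⟨j, hbp⟩
    rcases eq_of_adj_inr_of_ne_zero hj (hs hp hb (Ne.symm hbp)) with h | ⟨j', -, h⟩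
    exacts [.inl h, .inr ⟨j', h⟩]
  by_cases hx : Sum.inl p.1.2 ∈ s
  · refine (Finset.card_le_card fun b hb => ?_).trans
      (Finset.card_le_three (a := Sum.inl p.1.2) (b := Sum.inr (p, 1)) (c := Sum.inr (p, 2)))
    rcases hgadget b hb with rfl | ⟨j', rfl⟩
    · simp
    · have hj' : j' ≠ 0 := (adj_inl_inr.1 (hs hx hb (by simp))).2
      fin_cases j' <;> simp_all
  · refine (Finset.card_le_card fun b hb => ?_).trans
      (Finset.card_le_three (a := Sum.inr (p, 0)) (b := Sum.inr (p, 1)) (c := Sum.inr (p, 2)))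
    rcases hgadget b hb with rfl | ⟨j', rfl⟩
    · exact absurd hb hx
    · fin_cases j' <;> simp

lemma card_le_three_of_isClique (hC : ∀ i, (C i).card = 3)
    {s : Finset (XCVertex q m C)} (hs : (xcGraph q m C).IsClique (s : Set _)) : s.card ≤ 3 := by
  by_cases hinner : ∃ p j, j ≠ 0 ∧ Sum.inr (p, j) ∈ s
  · obtain ⟨p, j, hj, hp⟩ := hinner
    exact card_le_three_of_inr_mem hs hp hj
  push Not at hinner
  by_cases houter : ∃ x, Sum.inl x ∈ s
  · obtain ⟨x, hx⟩ := houter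
    refine (Finset.card_le_one.2 fun a ha b hb => ?_).trans (by norm_num)
    suffices ∀ a ∈ s, a = Sum.inl x from (this a ha).trans (this b hb).symm
    intro a ha
    by_contra hax
    obtain ⟨p, j, rfl, -, hj⟩ := exists_eq_of_adj_inl (hs hx ha (Ne.symm hax))
    exact hinner p j hj ha
  push Not at houter
  rcases s.eq_empty_or_nonempty with rfl | ⟨a, ha⟩
  · simp
  have hmiddle : ∀ b ∈ s, ∃ p : XCIncidence q m C, b = Sum.inr (p, 0) := by
    rintro (x | ⟨p, j⟩) hb
    · exact absurd hb (houter x)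
    · exact ⟨p, by rw [not_not.1 fun hj => hinner p j hj hb]⟩
  obtain ⟨p, rfl⟩ := hmiddle _ ha
  let middle : {y // y ∈ C p.1.1} → XCVertex q m C :=
    fun y => Sum.inr (⟨(p.1.1, y.1), y.2⟩, 0)
  have hcard : ((C p.1.1).attach.image middle).card ≤ 3 :=
    Finset.card_image_le.trans (by rw [Finset.card_attach, hC])
  refine (Finset.card_le_card fun b hb => ?_).trans hcard
  obtain ⟨p', rfl⟩ := hmiddle b hb
  have ht : p'.1.1 = p.1.1 := by
    by_cases hpp' : p' = p
    · rw [hpp']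
    rcases (adj_inr_inr.1 (hs hb ha (by simpa using hpp'))).2 with ⟨h, -⟩ | h
    exacts [h, absurd h hpp']
  refine Finset.mem_image.2 ⟨⟨p'.1.2, ht ▸ p'.2⟩, Finset.mem_attach _ _, ?_⟩
  show Sum.inr _ = _
  exact congrArg (fun r => Sum.inr (r, 0)) (Subtype.ext (Prod.ext ht.symm rfl))

theorem cliqueFree_four (hC : ∀ i, (C i).card = 3) : (xcGraph q m C).CliqueFree 4 := by
  intro s hs
  have := card_le_three_of_isClique hC hs.isClique
  rw [hs.card_eq] at this
  omega

lemma card_vertex (hC : ∀ i, (C i).card = 3) :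
    Fintype.card (XCVertex q m C) = 3 * q + 9 * m := by
  rw [Fintype.card_sum, Fintype.card_prod, Fintype.card_subtype, Finset.card_filter,
    Fintype.sum_prod_type]
  simp only [Finset.sum_boole]
  simp [hC]
  ring

/-- The triangle factor of `G'` built from a cover `S`: a chosen triplet contributes its middle
and outer triangles, any other triplet its inner triangles. `coverLabel S v` names the triangle
containing `v`. -/
def coverLabel (S : Finset (Fin m)) :
    XCVertex q m C → Fin m ⊕ (Fin (3 * q) ⊕ XCIncidence q m C)
  | Sum.inl x => Sum.inr (Sum.inl x)
  | Sum.inr (p, j) =>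
      if p.1.1 ∈ S then (if j = 0 then Sum.inl p.1.1 else Sum.inr (Sum.inl p.1.2))
      else Sum.inr (Sum.inr p)

def coverSubgraph (S : Finset (Fin m)) : SimpleGraph (XCVertex q m C) :=
  fromRel fun a b => coverLabel S a = coverLabel S b

variable {S : Finset (Fin m)}

lemma coverSubgraph_adj {a b : XCVertex q m C} :
    (coverSubgraph S).Adj a b ↔ a ≠ b ∧ coverLabel S a = coverLabel S b := by
  simp [coverSubgraph, fromRel_adj, eq_comm]

lemma satisfiesClosure_coverSubgraph : SatisfiesClosure (xcGraph q m C) (coverSubgraph S) P3 :=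
  satisfiesClosure_of_adj_trans fun _ _ _ hab hbc hac => coverSubgraph_adj.2
    ⟨hac, (coverSubgraph_adj.1 hab).2.trans (coverSubgraph_adj.1 hbc).2⟩

lemma coverLabel_inl_eq_inr {x : Fin (3 * q)} {p : XCIncidence q m C} {j : Fin 3}
    (h : coverLabel S (Sum.inl x) = coverLabel S (Sum.inr (p, j))) : x = p.1.2 ∧ j ≠ 0 := by
  simp only [coverLabel] at h
  split_ifs at h with hp hj <;> simp_all

lemma coverLabel_inr_eq_inr (hS : ∀ x, ∃! i, i ∈ S ∧ x ∈ C i) {p p' : XCIncidence q m C}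
    {j j' : Fin 3} (h : coverLabel S (Sum.inr (p, j)) = coverLabel S (Sum.inr (p', j'))) :
    (p.1.1 = p'.1.1 ∧ j = 0 ∧ j' = 0) ∨ p = p' := by
  simp only [coverLabel] at h
  split_ifs at h with hp hj hp' hj' hp' hj' hp' <;> simp only [Sum.inl.injEq, Sum.inr.injEq,
    reduceCtorEq] at h
  · exact .inl ⟨h, hj, hj'⟩
  · exact .inr (Subtype.ext (Prod.ext ((hS _).unique ⟨hp, p.2⟩ ⟨hp', h ▸ p'.2⟩) h))
  · exact .inr h

lemma coverSubgraph_le (hS : ∀ x, ∃! i, i ∈ S ∧ x ∈ C i) : coverSubgraph S ≤ xcGraph q m C := by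
  intro a b hab
  obtain ⟨hne, hl⟩ := coverSubgraph_adj.1 hab
  rcases a with x | ⟨p, j⟩ <;> rcases b with y | ⟨p', j'⟩
  · simp only [coverLabel, Sum.inr.injEq, Sum.inl.injEq] at hl
    exact absurd (congrArg _ hl) hne
  · exact adj_inl_inr.2 (coverLabel_inl_eq_inr hl)
  · exact adj_inr_inl.2 (coverLabel_inl_eq_inr hl.symm)
  · exact adj_inr_inr.2 ⟨fun h => hne (h ▸ rfl), coverLabel_inr_eq_inr hS hl⟩

lemma exists_coverSubgraph_adj (hC : ∀ i, (C i).card = 3) (hS : ∀ x, ∃! i, i ∈ S ∧ x ∈ C i)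
    (v : XCVertex q m C) :
    ∃ u w, u ≠ w ∧ (coverSubgraph S).Adj v u ∧ (coverSubgraph S).Adj v w := by
  simp only [coverSubgraph_adj]
  rcases v with x | ⟨p, j⟩
  · obtain ⟨i, ⟨hi, hx⟩, -⟩ := hS x
    exact ⟨Sum.inr (⟨(i, x), hx⟩, 1), Sum.inr (⟨(i, x), hx⟩, 2), by simp,
      by simp [coverLabel, hi], by simp [coverLabel, hi]⟩
  by_cases hp : p.1.1 ∈ S
  · by_cases hj : j = 0
    · subst hj
      obtain ⟨y, hy, z, hz, hyp, hzp, hyz⟩ :=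
        Finset.exists_ne_ne_of_card_eq_three (hC p.1.1) p.2
      have hne : ∀ y (hy : y ∈ C p.1.1), y ≠ p.1.2 →
          (Sum.inr (p, 0) : XCVertex q m C) ≠ Sum.inr (⟨(p.1.1, y), hy⟩, 0) :=
        fun y _ hyp h => hyp (congrArg (fun r : XCIncidence q m C => r.1.2)
          (Prod.ext_iff.1 (Sum.inr_injective h)).1).symm
      exact ⟨_, _, by simp [hyz], ⟨hne y hy hyp, by simp [coverLabel, hp]⟩,
        ⟨hne z hz hzp, by simp [coverLabel, hp]⟩⟩
    · obtain ⟨j', hj'0, hj'j⟩ : ∃ j' : Fin 3, j' ≠ 0 ∧ j' ≠ j := by revert j hj; decide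
      exact ⟨Sum.inl p.1.2, Sum.inr (p, j'), by simp, by simp [coverLabel, hp, hj],
        by simp [coverLabel, hp, hj, hj'0, hj'j.symm]⟩
  · exact ⟨Sum.inr (p, j + 1), Sum.inr (p, j + 2), by simp,
      by simp [coverLabel, hp], by simp [coverLabel, hp]⟩

variable {H : SimpleGraph (XCVertex q m C)}
  {x : Fin (3 * q)} {p s : XCIncidence q m C}

lemma eq_of_adj_inl_inr_of_adj_inl_inr (hle : H ≤ xcGraph q m C)
    (hcl : SatisfiesClosure (xcGraph q m C) H P3) {p' : XCIncidence q m C} {j j' : Fin 3}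
    (h : H.Adj (Sum.inl x) (Sum.inr (p, j))) (h' : H.Adj (Sum.inl x) (Sum.inr (p', j'))) :
    p = p' := by
  by_cases he : (Sum.inr (p, j) : XCVertex q m C) = Sum.inr (p', j')
  · simp only [Sum.inr.injEq, Prod.mk.injEq] at he
    exact he.1
  · exact eq_of_adj_inr_inr (hcl.adj_of_adj_of_adj hle h h' he) (adj_inl_inr.1 (hle h)).2

lemma adj_inl_inr_of_adj_inl_inr (hle : H ≤ xcGraph q m C)
    (hcl : SatisfiesClosure (xcGraph q m C) H P3) (hH : ∀ v z, ∃ u, u ≠ z ∧ H.Adj v u)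
    {j j' : Fin 3} (h : H.Adj (Sum.inl x) (Sum.inr (p, j))) (hj' : j' ≠ 0) :
    H.Adj (Sum.inl x) (Sum.inr (p, j')) := by
  obtain ⟨u, hu, hxu⟩ := hH (Sum.inl x) (Sum.inr (p, j))
  obtain ⟨p', j'', rfl, -, hj''⟩ := exists_eq_of_adj_inl (hle hxu)
  obtain rfl := eq_of_adj_inl_inr_of_adj_inl_inr hle hcl h hxu
  have hj : j ≠ 0 := (adj_inl_inr.1 (hle h)).2
  have hjj'' : j'' ≠ j := fun e => hu (by rw [e])
  obtain rfl | rfl : j' = j ∨ j' = j'' := by omega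
  exacts [h, hxu]

lemma exists_adj_inl_inr_one (hle : H ≤ xcGraph q m C)
    (hcl : SatisfiesClosure (xcGraph q m C) H P3) (hH : ∀ v z, ∃ u, u ≠ z ∧ H.Adj v u)
    (x : Fin (3 * q)) :
    ∃ p : XCIncidence q m C, p.1.2 = x ∧ H.Adj (Sum.inl x) (Sum.inr (p, 1)) := by
  obtain ⟨u, -, hxu⟩ := hH (Sum.inl x) (Sum.inl x)
  obtain ⟨p, j, rfl, hpx, -⟩ := exists_eq_of_adj_inl (hle hxu)
  exact ⟨p, hpx, adj_inl_inr_of_adj_inl_inr hle hcl hH hxu one_ne_zero⟩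

lemma not_adj_inr_zero_of_adj_inl_inr (hle : H ≤ xcGraph q m C)
    (hcl : SatisfiesClosure (xcGraph q m C) H P3) (hH : ∀ v z, ∃ u, u ≠ z ∧ H.Adj v u)
    {j : Fin 3} (h : H.Adj (Sum.inl x) (Sum.inr (p, 1))) (hj : j ≠ 0) :
    ¬ H.Adj (Sum.inr (p, 0)) (Sum.inr (p, j)) := fun h₀ =>
  absurd (adj_inl_inr.1 (hcl.adj_of_adj_of_adj hle
    (adj_inl_inr_of_adj_inl_inr hle hcl hH h hj).symm h₀.symm (by simp))).2 (not_not.2 rfl)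

lemma adj_inl_inr_of_not_adj (hle : H ≤ xcGraph q m C) (hH : ∀ v z, ∃ u, u ≠ z ∧ H.Adj v u)
    (hs : ¬ H.Adj (Sum.inr (s, 0)) (Sum.inr (s, 1))) : H.Adj (Sum.inl s.1.2) (Sum.inr (s, 1)) := by
  obtain ⟨u, hu, hsu⟩ := hH (Sum.inr (s, 1)) (Sum.inr (s, 2))
  rcases eq_of_adj_inr_of_ne_zero one_ne_zero (hle hsu) with rfl | ⟨j, hj, rfl⟩
  · exact hsu.symm
  · obtain rfl : j = 0 := by
      have : j ≠ 2 := fun e => hu (by rw [e])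
      omega
    exact absurd hsu.symm hs

lemma adj_inr_zero_of_adj_inl_inr (hC : ∀ i, (C i).card = 3) (hle : H ≤ xcGraph q m C)
    (hcl : SatisfiesClosure (xcGraph q m C) H P3) (hH : ∀ v z, ∃ u, u ≠ z ∧ H.Adj v u)
    (h : H.Adj (Sum.inl x) (Sum.inr (p, 1))) (hs : s.1.1 = p.1.1) (hsp : s ≠ p) :
    H.Adj (Sum.inr (p, 0)) (Sum.inr (s, 0)) := by
  have hmiddle : ∀ z, H.Adj (Sum.inr (p, 0)) z →
      ∃ r : XCIncidence q m C, r ≠ p ∧ r.1.1 = p.1.1 ∧ z = Sum.inr (r, 0) := by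
    intro z hz
    rcases eq_of_adj_inr_zero (hle hz) with ⟨j, hj, rfl⟩ | hr
    · exact absurd hz (not_adj_inr_zero_of_adj_inl_inr hle hcl hH h hj)
    · exact hr
  obtain ⟨u, -, hu⟩ := hH (Sum.inr (p, 0)) (Sum.inr (p, 0))
  obtain ⟨r₁, hr₁p, hr₁, rfl⟩ := hmiddle u hu
  obtain ⟨w, hwu, hw⟩ := hH (Sum.inr (p, 0)) (Sum.inr (r₁, 0))
  obtain ⟨r₂, hr₂p, hr₂, rfl⟩ := hmiddle w hw
  rcases eq_or_eq_or_eq_of_fst_eq hC hr₁ hr₂ hs hr₁p.symm hr₂p.symm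
    (fun e => hwu (by rw [e])) with rfl | rfl | rfl
  exacts [absurd rfl hsp, hu, hw]

lemma adj_inl_inr_of_fst_eq (hC : ∀ i, (C i).card = 3) (hle : H ≤ xcGraph q m C)
    (hcl : SatisfiesClosure (xcGraph q m C) H P3) (hH : ∀ v z, ∃ u, u ≠ z ∧ H.Adj v u)
    (h : H.Adj (Sum.inl p.1.2) (Sum.inr (p, 1))) (hs : s.1.1 = p.1.1) :
    H.Adj (Sum.inl s.1.2) (Sum.inr (s, 1)) := by
  by_cases hsp : s = p
  · rwa [hsp]
  refine adj_inl_inr_of_not_adj hle hH fun hs₁ => hsp ?_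
  have hps := adj_inr_zero_of_adj_inl_inr hC hle hcl hH h hs hsp
  exact (eq_of_adj_inr_inr (hcl.adj_of_adj_of_adj hle hps.symm hs₁ (by simp)).symm one_ne_zero)

theorem exists_exactCover (hC : ∀ i, (C i).card = 3) (hle : H ≤ xcGraph q m C)
    (hcl : SatisfiesClosure (xcGraph q m C) H P3) (hH : ∀ v z, ∃ u, u ≠ z ∧ H.Adj v u) :
    ∃ S : Finset (Fin m), ∀ x : Fin (3 * q), ∃! i, i ∈ S ∧ x ∈ C i := by
  classical
  refine ⟨Finset.univ.filter fun t =>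
    ∀ y (hy : y ∈ C t), H.Adj (Sum.inl y) (Sum.inr (⟨(t, y), hy⟩, 1)), fun x => ?_⟩
  obtain ⟨p, rfl, hp⟩ := exists_adj_inl_inr_one hle hcl hH x
  refine ⟨p.1.1, ⟨Finset.mem_filter.2 ⟨Finset.mem_univ _, fun y hy =>
    adj_inl_inr_of_fst_eq (s := ⟨(p.1.1, y), hy⟩) hC hle hcl hH hp rfl⟩, p.2⟩, ?_⟩
  rintro i ⟨hi, hx⟩
  exact congrArg (fun r => r.1.1)
    (eq_of_adj_inl_inr_of_adj_inl_inr hle hcl ((Finset.mem_filter.1 hi).2 _ hx) hp)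

end xcGraph

/-- The collection `C` of triplets of `X = Fin (3*q)` contains an exact cover of `X` iff the
graph `G'` has a spanning subgraph `H` satisfying the `P3`-closure with `|E(H)| ≥ 9m + 3q`. -/
theorem stmt_16 (q m : ℕ) (C : Fin m → Finset (Fin (3 * q)))
    (hC : ∀ i, (C i).card = 3) :
    (∃ S : Finset (Fin m), ∀ x : Fin (3 * q), ∃! i, i ∈ S ∧ x ∈ C i) ↔
    (∃ H ≤ xcGraph q m C, SatisfiesClosure (xcGraph q m C) H P3 ∧
      9 * m + 3 * q ≤ H.edgeSet.ncard) := by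
  classical
  constructor
  · rintro ⟨S, hS⟩
    refine ⟨xcGraph.coverSubgraph S, xcGraph.coverSubgraph_le hS,
      xcGraph.satisfiesClosure_coverSubgraph, ?_⟩
    have hcard := card_le_ncard_edgeSet_of_two_le_degree _ fun v => by
      obtain ⟨u, w, huw, hu, hw⟩ := xcGraph.exists_coverSubgraph_adj hC hS v
      exact two_le_degree_of_adj _ hu hw huw
    rw [xcGraph.card_vertex hC] at hcard
    omega
  · rintro ⟨H, hle, hcl, hcard⟩
    have hdeg := degree_eq_two_of_card_le_ncard_edgeSet H
      (fun v => hcl.degree_le_two hle (xcGraph.cliqueFree_four hC) v)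
      (by rw [xcGraph.card_vertex hC]; omega)
    exact xcGraph.exists_exactCover hC hle hcl fun v =>
      exists_adj_ne_of_two_le_degree H (hdeg v).ge
end

section
/- Let G be a K4-free graph with maximum degree Δ(G) ≤ 4, and let M be a matching of G such that every triangle of G contains no edge of M and has all three of its vertices covered by M. Then: (1) any two distinct triangles of G that share a vertex share exactly one edge; and (2) if two distinct triangles T1 and T2 share an edge, then no triangle other than T1 and T2 shares a vertex with T1 or with T2. -/
set_option linter.unusedSectionVars false

open SimpleGraph

section Aux

variable {V : Type*} [Fintype V] [DecidableEq V] {G : SimpleGraph V}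

omit [Fintype V] [DecidableEq V] in
private lemma tri_adj {T : Finset V} (hT : G.IsNClique 3 T) {x y : V}
    (hx : x ∈ T) (hy : y ∈ T) (hxy : x ≠ y) : G.Adj x y :=
  hT.1 (Finset.mem_coe.mpr hx) (Finset.mem_coe.mpr hy) hxy

private lemma key (hdeg : ∀ v, (G.neighborSet v).ncard ≤ 4)
    {M : G.Subgraph} (hM : M.IsMatching)
    (htri : ∀ T : Finset V, G.IsNClique 3 T →
      (∀ x ∈ T, ∀ y ∈ T, ¬ M.Adj x y) ∧ (∀ x ∈ T, x ∈ M.verts))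
    {v w1 w2 w3 w4 : V}
    (h12 : w1 ≠ w2) (h13 : w1 ≠ w3) (h14 : w1 ≠ w4)
    (h23 : w2 ≠ w3) (h24 : w2 ≠ w4) (h34 : w3 ≠ w4)
    (hv1 : v ≠ w1) (hv2 : v ≠ w2) (hv3 : v ≠ w3) (hv4 : v ≠ w4)
    (t1 : ∃ T, G.IsNClique 3 T ∧ v ∈ T ∧ w1 ∈ T)
    (t2 : ∃ T, G.IsNClique 3 T ∧ v ∈ T ∧ w2 ∈ T)
    (t3 : ∃ T, G.IsNClique 3 T ∧ v ∈ T ∧ w3 ∈ T)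
    (t4 : ∃ T, G.IsNClique 3 T ∧ v ∈ T ∧ w4 ∈ T) : False := by
  obtain ⟨T1, hT1, hvT1, hw1⟩ := t1
  obtain ⟨T2, hT2, hvT2, hw2⟩ := t2
  obtain ⟨T3, hT3, hvT3, hw3⟩ := t3
  obtain ⟨T4, hT4, hvT4, hw4⟩ := t4
  have hvM : v ∈ M.verts := (htri T1 hT1).2 v hvT1
  obtain ⟨x, hx, -⟩ := hM hvM
  have hGx : G.Adj v x := M.adj_sub hx
  have hsub : ({w1, w2, w3, w4} : Set V) ⊆ G.neighborSet v := by
    intro y hy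
    simp only [Set.mem_insert_iff, Set.mem_singleton_iff] at hy
    rcases hy with rfl | rfl | rfl | rfl
    · exact tri_adj hT1 hvT1 hw1 hv1
    · exact tri_adj hT2 hvT2 hw2 hv2
    · exact tri_adj hT3 hvT3 hw3 hv3
    · exact tri_adj hT4 hvT4 hw4 hv4
  have hcard : ({w1, w2, w3, w4} : Set V).ncard = 4 := by
    rw [Set.ncard_insert_of_notMem (by simp [h12, h13, h14]) (Set.toFinite _),
        Set.ncard_insert_of_notMem (by simp [h23, h24]) (Set.toFinite _),
        Set.ncard_insert_of_notMem (by simp [h34]) (Set.toFinite _),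
        Set.ncard_singleton]
  have heq : ({w1, w2, w3, w4} : Set V) = G.neighborSet v :=
    Set.eq_of_subset_of_ncard_le hsub (by rw [hcard]; exact hdeg v) (Set.toFinite _)
  have hx4 : x ∈ ({w1, w2, w3, w4} : Set V) := by rw [heq]; exact hGx
  simp only [Set.mem_insert_iff, Set.mem_singleton_iff] at hx4
  rcases hx4 with rfl | rfl | rfl | rfl
  · exact (htri T1 hT1).1 v hvT1 x hw1 hx
  · exact (htri T2 hT2).1 v hvT2 x hw2 hx
  · exact (htri T3 hT3).1 v hvT3 x hw3 hx
  · exact (htri T4 hT4).1 v hvT4 x hw4 hx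

private lemma aux1 (hdeg : ∀ v, (G.neighborSet v).ncard ≤ 4)
    {M : G.Subgraph} (hM : M.IsMatching)
    (htri : ∀ T : Finset V, G.IsNClique 3 T →
      (∀ x ∈ T, ∀ y ∈ T, ¬ M.Adj x y) ∧ (∀ x ∈ T, x ∈ M.verts)) :
    ∀ T1 T2 : Finset V, G.IsNClique 3 T1 → G.IsNClique 3 T2 → T1 ≠ T2 →
      (T1 ∩ T2).Nonempty → (T1 ∩ T2).card = 2 := by
  intro T1 T2 h1 h2 hne hFne
  have hc1 : T1.card = 3 := h1.2
  have hc2 : T2.card = 3 := h2.2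
  have hle : (T1 ∩ T2).card ≤ 3 := hc1 ▸ Finset.card_le_card Finset.inter_subset_left
  have hge : 1 ≤ (T1 ∩ T2).card := Finset.card_pos.2 hFne
  have hne3 : (T1 ∩ T2).card ≠ 3 := by
    intro h
    have h' : T1 ∩ T2 = T1 :=
      Finset.eq_of_subset_of_card_le Finset.inter_subset_left (by omega)
    have hsub : T1 ⊆ T2 := by rw [← h']; exact Finset.inter_subset_right
    exact hne (Finset.eq_of_subset_of_card_le hsub (by omega))
  have hne1 : (T1 ∩ T2).card ≠ 1 := by
    intro h
    obtain ⟨v, hv⟩ := Finset.card_eq_one.1 h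
    have hvI : v ∈ T1 ∩ T2 := by rw [hv]; exact Finset.mem_singleton_self v
    obtain ⟨hvT1, hvT2⟩ := Finset.mem_inter.1 hvI
    have hce1 : (T1.erase v).card = 2 := by rw [Finset.card_erase_of_mem hvT1, hc1]
    have hce2 : (T2.erase v).card = 2 := by rw [Finset.card_erase_of_mem hvT2, hc2]
    obtain ⟨a, b, hab, habs⟩ := Finset.card_eq_two.1 hce1
    obtain ⟨c, d, hcd, hcds⟩ := Finset.card_eq_two.1 hce2
    have ha' : a ∈ T1.erase v := by rw [habs]; simp
    have hb' : b ∈ T1.erase v := by rw [habs]; simp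
    have hc' : c ∈ T2.erase v := by rw [hcds]; simp
    have hd' : d ∈ T2.erase v := by rw [hcds]; simp
    have haT1 : a ∈ T1 := Finset.mem_of_mem_erase ha'
    have hbT1 : b ∈ T1 := Finset.mem_of_mem_erase hb'
    have hcT2 : c ∈ T2 := Finset.mem_of_mem_erase hc'
    have hdT2 : d ∈ T2 := Finset.mem_of_mem_erase hd'
    have hav : a ≠ v := Finset.ne_of_mem_erase ha'
    have hbv : b ≠ v := Finset.ne_of_mem_erase hb'
    have hcv : c ≠ v := Finset.ne_of_mem_erase hc'
    have hdv : d ≠ v := Finset.ne_of_mem_erase hd'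
    have haT2 : a ∉ T2 := by
      intro h'
      have : a ∈ T1 ∩ T2 := Finset.mem_inter.2 ⟨haT1, h'⟩
      rw [hv] at this
      exact hav (Finset.mem_singleton.1 this)
    have hbT2 : b ∉ T2 := by
      intro h'
      have : b ∈ T1 ∩ T2 := Finset.mem_inter.2 ⟨hbT1, h'⟩
      rw [hv] at this
      exact hbv (Finset.mem_singleton.1 this)
    have hac : a ≠ c := fun h' => haT2 (by rw [h']; exact hcT2)
    have had : a ≠ d := fun h' => haT2 (by rw [h']; exact hdT2)
    have hbc : b ≠ c := fun h' => hbT2 (by rw [h']; exact hcT2)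
    have hbd : b ≠ d := fun h' => hbT2 (by rw [h']; exact hdT2)
    exact key hdeg hM htri hab hac had hbc hbd hcd
      hav.symm hbv.symm hcv.symm hdv.symm
      ⟨T1, h1, hvT1, haT1⟩ ⟨T1, h1, hvT1, hbT1⟩
      ⟨T2, h2, hvT2, hcT2⟩ ⟨T2, h2, hvT2, hdT2⟩
  omega

private lemma sub2 (hK4 : G.CliqueFree 4) (hdeg : ∀ v, (G.neighborSet v).ncard ≤ 4)
    {M : G.Subgraph} (hM : M.IsMatching)
    (htri : ∀ T : Finset V, G.IsNClique 3 T →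
      (∀ x ∈ T, ∀ y ∈ T, ¬ M.Adj x y) ∧ (∀ x ∈ T, x ∈ M.verts))
    {T1 T2 T3 : Finset V}
    (h1 : G.IsNClique 3 T1) (h2 : G.IsNClique 3 T2) (h3 : G.IsNClique 3 T3)
    {a b c d : V}
    (haT1 : a ∈ T1) (hbT1 : b ∈ T1) (hcT1 : c ∈ T1)
    (haT2 : a ∈ T2) (hbT2 : b ∈ T2) (hdT2 : d ∈ T2)
    (hab : a ≠ b) (hac : a ≠ c) (hbc : b ≠ c)
    (had : a ≠ d) (hbd : b ≠ d) (hcd : c ≠ d)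
    (haT3 : a ∈ T3) (hcT3 : c ∈ T3) (hbT3 : b ∉ T3) : False := by
  -- third vertex of T3
  have hlt : ({a, c} : Finset V).card < T3.card := by
    rw [h3.2, Finset.card_insert_of_notMem (by simp [hac]), Finset.card_singleton]
    omega
  have hns : ¬ T3 ⊆ {a, c} := fun h' => absurd (Finset.card_le_card h') (by omega)
  obtain ⟨e, heT3, he⟩ := Finset.not_subset.1 hns
  simp only [Finset.mem_insert, Finset.mem_singleton, not_or] at he
  obtain ⟨hea, hec⟩ := he
  have heb : e ≠ b := fun h' => hbT3 (h' ▸ heT3)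
  by_cases hed : e = d
  · -- K4 on {a,b,c,d}
    subst hed
    have Hab : G.Adj a b := tri_adj h1 haT1 hbT1 hab
    have Hac : G.Adj a c := tri_adj h1 haT1 hcT1 hac
    have Had : G.Adj a e := tri_adj h2 haT2 hdT2 had
    have Hbc : G.Adj b c := tri_adj h1 hbT1 hcT1 hbc
    have Hbd : G.Adj b e := tri_adj h2 hbT2 hdT2 hbd
    have Hcd : G.Adj c e := tri_adj h3 hcT3 heT3 hcd
    refine hK4 ({a, b, c, e} : Finset V) ⟨?_, ?_⟩
    · intro x hx y hy hxy
      simp only [Finset.coe_insert, Set.mem_insert_iff, Finset.coe_singleton,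
        Set.mem_singleton_iff] at hx hy
      rcases hx with rfl | rfl | rfl | rfl <;> rcases hy with rfl | rfl | rfl | rfl <;>
        first
          | exact absurd rfl hxy
          | exact Hab | exact Hab.symm | exact Hac | exact Hac.symm
          | exact Had | exact Had.symm | exact Hbc | exact Hbc.symm
          | exact Hbd | exact Hbd.symm | exact Hcd | exact Hcd.symm
    · rw [Finset.card_insert_of_notMem (by simp [hab, hac, had]),
          Finset.card_insert_of_notMem (by simp [hbc, hbd]),
          Finset.card_insert_of_notMem (by simp [hcd]), Finset.card_singleton]
  · exact key hdeg hM htri hbc hbd (Ne.symm heb) hcd (Ne.symm hec) (fun h' => hed h'.symm)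
      hab hac had (Ne.symm hea)
      ⟨T1, h1, haT1, hbT1⟩ ⟨T1, h1, haT1, hcT1⟩
      ⟨T2, h2, haT2, hdT2⟩ ⟨T3, h3, haT3, heT3⟩

private lemma meets (hK4 : G.CliqueFree 4) (hdeg : ∀ v, (G.neighborSet v).ncard ≤ 4)
    {M : G.Subgraph} (hM : M.IsMatching)
    (htri : ∀ T : Finset V, G.IsNClique 3 T →
      (∀ x ∈ T, ∀ y ∈ T, ¬ M.Adj x y) ∧ (∀ x ∈ T, x ∈ M.verts))
    {T1 T2 T3 : Finset V}
    (h1 : G.IsNClique 3 T1) (h2 : G.IsNClique 3 T2) (h3 : G.IsNClique 3 T3)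
    {a b c d : V}
    (haT1 : a ∈ T1) (hbT1 : b ∈ T1) (hcT1 : c ∈ T1)
    (haT2 : a ∈ T2) (hbT2 : b ∈ T2) (hdT2 : d ∈ T2)
    (hab : a ≠ b) (hac : a ≠ c) (hbc : b ≠ c)
    (had : a ≠ d) (hbd : b ≠ d) (hcd : c ≠ d)
    (hne31 : T3 ≠ T1) (hne32 : T3 ≠ T2)
    (hmeet : ¬ Disjoint T3 T1) : False := by
  have hT1eq : {a, b, c} = T1 := by
    apply Finset.eq_of_subset_of_card_le
    · intro x hx
      simp only [Finset.mem_insert, Finset.mem_singleton] at hx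
      rcases hx with rfl | rfl | rfl <;> assumption
    · rw [h1.2, Finset.card_insert_of_notMem (by simp [hab, hac]),
          Finset.card_insert_of_notMem (by simp [hbc]), Finset.card_singleton]
  have hFne : (T3 ∩ T1).Nonempty := by
    obtain ⟨x, hx3, hx1⟩ := Finset.not_disjoint_iff.1 hmeet
    exact ⟨x, Finset.mem_inter.2 ⟨hx3, hx1⟩⟩
  have hcard : (T3 ∩ T1).card = 2 := aux1 hdeg hM htri T3 T1 h3 h1 hne31 hFne
  by_cases haT3 : a ∈ T3 <;> by_cases hbT3 : b ∈ T3 <;> by_cases hcT3 : c ∈ T3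
  · -- all three: T3 = T1
    apply hne31
    have hT3eq : {a, b, c} = T3 := by
      apply Finset.eq_of_subset_of_card_le
      · intro x hx
        simp only [Finset.mem_insert, Finset.mem_singleton] at hx
        rcases hx with rfl | rfl | rfl <;> assumption
      · rw [h3.2, Finset.card_insert_of_notMem (by simp [hab, hac]),
            Finset.card_insert_of_notMem (by simp [hbc]), Finset.card_singleton]
    rw [← hT3eq, hT1eq]
  · -- a, b ∈ T3, c ∉ T3
    have hlt : ({a, b} : Finset V).card < T3.card := by
      rw [h3.2, Finset.card_insert_of_notMem (by simp [hab]), Finset.card_singleton]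
      omega
    have hns : ¬ T3 ⊆ {a, b} := fun h' => absurd (Finset.card_le_card h') (by omega)
    obtain ⟨e, heT3, he⟩ := Finset.not_subset.1 hns
    simp only [Finset.mem_insert, Finset.mem_singleton, not_or] at he
    obtain ⟨hea, heb⟩ := he
    have hec : e ≠ c := fun h' => hcT3 (h' ▸ heT3)
    by_cases hed : e = d
    · subst hed
      apply hne32
      have hT3eq : {a, b, e} = T3 := by
        apply Finset.eq_of_subset_of_card_le
        · intro x hx
          simp only [Finset.mem_insert, Finset.mem_singleton] at hx
          rcases hx with rfl | rfl | rfl <;> assumption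
        · rw [h3.2, Finset.card_insert_of_notMem (by simp [hab, had]),
              Finset.card_insert_of_notMem (by simp [hbd]), Finset.card_singleton]
      have hT2eq : {a, b, e} = T2 := by
        apply Finset.eq_of_subset_of_card_le
        · intro x hx
          simp only [Finset.mem_insert, Finset.mem_singleton] at hx
          rcases hx with rfl | rfl | rfl <;> assumption
        · rw [h2.2, Finset.card_insert_of_notMem (by simp [hab, had]),
              Finset.card_insert_of_notMem (by simp [hbd]), Finset.card_singleton]
      rw [← hT3eq, hT2eq]
    · exact key hdeg hM htri hbc hbd (Ne.symm heb) hcd (Ne.symm hec) (fun h' => hed h'.symm)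
        hab hac had (Ne.symm hea)
        ⟨T1, h1, haT1, hbT1⟩ ⟨T1, h1, haT1, hcT1⟩
        ⟨T2, h2, haT2, hdT2⟩ ⟨T3, h3, haT3, heT3⟩
  · -- a, c ∈ T3, b ∉ T3
    exact sub2 hK4 hdeg hM htri h1 h2 h3 haT1 hbT1 hcT1 haT2 hbT2 hdT2
      hab hac hbc had hbd hcd haT3 hcT3 hbT3
  · -- only a
    have hsub : T3 ∩ T1 ⊆ {a} := by
      intro x hx
      obtain ⟨hx3, hx1⟩ := Finset.mem_inter.1 hx
      rw [← hT1eq] at hx1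
      simp only [Finset.mem_insert, Finset.mem_singleton] at hx1
      rcases hx1 with rfl | rfl | rfl
      · exact Finset.mem_singleton_self x
      · exact absurd hx3 hbT3
      · exact absurd hx3 hcT3
    have := Finset.card_le_card hsub
    simp at this
    omega
  · -- b, c ∈ T3, a ∉ T3
    exact sub2 hK4 hdeg hM htri h1 h2 h3 hbT1 haT1 hcT1 hbT2 haT2 hdT2
      hab.symm hbc hac hbd had hcd hbT3 hcT3 haT3
  · -- only b
    have hsub : T3 ∩ T1 ⊆ {b} := by
      intro x hx
      obtain ⟨hx3, hx1⟩ := Finset.mem_inter.1 hx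
      rw [← hT1eq] at hx1
      simp only [Finset.mem_insert, Finset.mem_singleton] at hx1
      rcases hx1 with rfl | rfl | rfl
      · exact absurd hx3 haT3
      · exact Finset.mem_singleton_self x
      · exact absurd hx3 hcT3
    have := Finset.card_le_card hsub
    simp at this
    omega
  · -- only c
    have hsub : T3 ∩ T1 ⊆ {c} := by
      intro x hx
      obtain ⟨hx3, hx1⟩ := Finset.mem_inter.1 hx
      rw [← hT1eq] at hx1
      simp only [Finset.mem_insert, Finset.mem_singleton] at hx1
      rcases hx1 with rfl | rfl | rfl
      · exact absurd hx3 haT3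
      · exact absurd hx3 hbT3
      · exact Finset.mem_singleton_self x
    have := Finset.card_le_card hsub
    simp at this
    omega
  · -- none
    have hsub : T3 ∩ T1 ⊆ {a} := by
      intro x hx
      obtain ⟨hx3, hx1⟩ := Finset.mem_inter.1 hx
      rw [← hT1eq] at hx1
      simp only [Finset.mem_insert, Finset.mem_singleton] at hx1
      rcases hx1 with rfl | rfl | rfl
      · exact absurd hx3 haT3
      · exact absurd hx3 hbT3
      · exact absurd hx3 hcT3
    have := Finset.card_le_card hsub
    simp at this
    omega

end Aux

/-- Let `G` be a `K4`-free graph with maximum degree at most 4, and let `M` be a matching of `G`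
such that every triangle of `G` contains no edge of `M` and has all three of its vertices covered
by `M`. Then: (1) any two distinct triangles of `G` that share a vertex share exactly one edge
(i.e. exactly two vertices); and (2) if two distinct triangles `T1` and `T2` share an edge, then
no triangle other than `T1` and `T2` shares a vertex with `T1` or with `T2`. -/
theorem stmt_17 {V : Type*} [Fintype V] [DecidableEq V] (G : SimpleGraph V)
    (hK4 : G.CliqueFree 4) (hdeg : ∀ v, (G.neighborSet v).ncard ≤ 4)
    (M : G.Subgraph) (hM : M.IsMatching)
    (htri : ∀ T : Finset V, G.IsNClique 3 T →
      (∀ x ∈ T, ∀ y ∈ T, ¬ M.Adj x y) ∧ (∀ x ∈ T, x ∈ M.verts)) :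
    (∀ T1 T2 : Finset V, G.IsNClique 3 T1 → G.IsNClique 3 T2 → T1 ≠ T2 →
      (T1 ∩ T2).Nonempty → (T1 ∩ T2).card = 2) ∧
    (∀ T1 T2 : Finset V, G.IsNClique 3 T1 → G.IsNClique 3 T2 → T1 ≠ T2 →
      (T1 ∩ T2).card = 2 →
      ∀ T3 : Finset V, G.IsNClique 3 T3 → T3 ≠ T1 → T3 ≠ T2 →
        Disjoint T3 T1 ∧ Disjoint T3 T2) := by
  constructor
  · exact aux1 hdeg hM htri
  · intro T1 T2 h1 h2 hne hcard T3 h3 hne1 hne2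
    obtain ⟨a, b, hab, habeq⟩ := Finset.card_eq_two.1 hcard
    have haI : a ∈ T1 ∩ T2 := by rw [habeq]; simp
    have hbI : b ∈ T1 ∩ T2 := by rw [habeq]; simp
    obtain ⟨haT1, haT2⟩ := Finset.mem_inter.1 haI
    obtain ⟨hbT1, hbT2⟩ := Finset.mem_inter.1 hbI
    have hns1 : ¬ T1 ⊆ T2 := fun h =>
      hne (Finset.eq_of_subset_of_card_le h (by rw [h1.2, h2.2]))
    have hns2 : ¬ T2 ⊆ T1 := fun h =>
      hne (Finset.eq_of_subset_of_card_le h (by rw [h1.2, h2.2])).symm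
    obtain ⟨c, hcT1, hcT2'⟩ := Finset.not_subset.1 hns1
    obtain ⟨d, hdT2, hdT1'⟩ := Finset.not_subset.1 hns2
    have hac : a ≠ c := fun h' => hcT2' (by rw [← h']; exact haT2)
    have hbc : b ≠ c := fun h' => hcT2' (by rw [← h']; exact hbT2)
    have had : a ≠ d := fun h' => hdT1' (by rw [← h']; exact haT1)
    have hbd : b ≠ d := fun h' => hdT1' (by rw [← h']; exact hbT1)
    have hcd : c ≠ d := fun h' => hcT2' (by rw [h']; exact hdT2)
    constructor
    · by_contra hmeet
      exact meets hK4 hdeg hM htri h1 h2 h3 haT1 hbT1 hcT1 haT2 hbT2 hdT2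
        hab hac hbc had hbd hcd hne1 hne2 hmeet
    · by_contra hmeet
      exact meets hK4 hdeg hM htri h2 h1 h3 haT2 hbT2 hdT2 haT1 hbT1 hcT1
        hab had hbd hac hbc hcd.symm hne2 hne1 hmeet
end

section
/- Let G be a graph with maximum degree Δ(G) ≤ 4 and let X ⊆ V(G) be such that every vertex of X has at least two neighbors inside X and the graph G − X is K4-free. Let T = {a, b, c} be a triangle of G − X, and let H be a spanning subgraph of G satisfying the P3-closure that contains all three edges of T. Then no edge of H other than the three edges of T is incident to a, b, or c. -/
open SimpleGraph

lemma path_iso_aux {V : Type*} (K : SimpleGraph V) {u v w : V} (huv : K.Adj u v)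
    (hvw : K.Adj v w) (huw : ¬K.Adj u w) (hne : u ≠ w) :
    Nonempty ((K.induce {u, v, w}) ≃g P3) := by
  have huv' : u ≠ v := huv.ne
  have hvw' : v ≠ w := hvw.ne
  let f : Fin 3 → ({u, v, w} : Set V) :=
    ![⟨u, by simp⟩, ⟨v, by simp⟩, ⟨w, by simp⟩]
  have hinj : Function.Injective f := by
    intro i j hij
    fin_cases i <;> fin_cases j <;> simp_all [f, Subtype.ext_iff]
  have hsurj : Function.Surjective f := by
    rintro ⟨x, hx⟩
    rcases hx with h | h | h
    · exact ⟨0, by simp [f, h]⟩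
    · exact ⟨1, by simp [f, h]⟩
    · simp only [Set.mem_singleton_iff] at h
      exact ⟨2, by simp [f, h]⟩
  refine ⟨(⟨Equiv.ofBijective f ⟨hinj, hsurj⟩, ?_⟩ : P3 ≃g (K.induce {u, v, w})).symm⟩
  intro i j
  show (K.induce _).Adj (f i) (f j) ↔ P3.Adj i j
  have huw2 : ¬K.Adj w u := fun h => huw h.symm
  fin_cases i <;> fin_cases j <;>
    simp [f, P3, huv, hvw, huw, huv.symm, hvw.symm, huv', hvw', hne,
      huw2, Ne.symm huv', Ne.symm hvw', Ne.symm hne]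

/-- If `H ≤ G` satisfies the `P3`-closure, `H.Adj p q`, `H.Adj p y` and `y ≠ q`,
then `G.Adj y q`. -/
lemma step_aux {V : Type*} {G H : SimpleGraph V} (hH : H ≤ G)
    (hcl : SatisfiesClosure G H P3) {p q y : V} (hpq : H.Adj p q) (hpy : H.Adj p y)
    (hyq : y ≠ q) : G.Adj y q := by
  by_contra hGyq
  have hHyq : ¬H.Adj y q := fun h => hGyq (hH h)
  have h1 : Nonempty ((H.induce {y, p, q}) ≃g P3) :=
    path_iso_aux H hpy.symm hpq hHyq hyq
  have h2 : Nonempty ((G.induce {y, p, q}) ≃g P3) :=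
    path_iso_aux G (hH hpy.symm) (hH hpq) hGyq hyq
  exact hcl _ h1 h2

/-- Let `G` have maximum degree at most 4, let `X ⊆ V(G)` be such that every vertex of `X` has at
least two neighbors inside `X` and `G − X` is `K4`-free. Let `T = {a, b, c}` be a triangle of
`G − X`, and let `H` be a spanning subgraph of `G` satisfying the `P3`-closure containing the
three edges of `T`. Then every edge of `H` incident to `a`, `b` or `c` has both endpoints in
`T` (i.e. no edge of `H` other than the three edges of `T` is incident to `a`, `b`, or `c`). -/
theorem stmt_18 {V : Type*} [Fintype V] (G : SimpleGraph V)
    (hdeg : ∀ v, (G.neighborSet v).ncard ≤ 4) (X : Set V)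
    (hX : ∀ v ∈ X, 2 ≤ (G.neighborSet v ∩ X).ncard)
    (hK4 : (G.induce Xᶜ).CliqueFree 4)
    (a b c : V) (ha : a ∉ X) (hb : b ∉ X) (hc : c ∉ X)
    (hab : G.Adj a b) (hbc : G.Adj b c) (hac : G.Adj a c)
    (H : SimpleGraph V) (hH : H ≤ G) (hcl : SatisfiesClosure G H P3)
    (hHab : H.Adj a b) (hHbc : H.Adj b c) (hHac : H.Adj a c) :
    ∀ x y, H.Adj x y → x ∈ ({a, b, c} : Set V) → y ∈ ({a, b, c} : Set V) := by
  classical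
  intro x y hxy hx
  by_contra hy
  simp only [Set.mem_insert_iff, Set.mem_singleton_iff, not_or] at hy
  obtain ⟨hya, hyb, hyc⟩ := hy
  -- In every case, y is adjacent in G to a, b and c.
  have key : G.Adj y a ∧ G.Adj y b ∧ G.Adj y c := by
    rcases hx with rfl | rfl | hx
    · exact ⟨(hH hxy).symm, step_aux hH hcl hHab hxy hyb, step_aux hH hcl hHac hxy hyc⟩
    · exact ⟨step_aux hH hcl hHab.symm hxy hya, (hH hxy).symm,
        step_aux hH hcl hHbc hxy hyc⟩
    · rw [Set.mem_singleton_iff] at hx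
      subst hx
      exact ⟨step_aux hH hcl hHac.symm hxy hya, step_aux hH hcl hHbc.symm hxy hyb,
        (hH hxy).symm⟩
  obtain ⟨hGya, hGyb, hGyc⟩ := key
  by_cases hyX : y ∈ X
  · -- y has neighbors a, b, c outside X plus at least two inside X: degree ≥ 5.
    have hsub : ({a, b, c} : Set V) ∪ (G.neighborSet y ∩ X) ⊆ G.neighborSet y := by
      rintro z (hz | hz)
      · rcases hz with rfl | rfl | hz
        · exact hGya
        · exact hGyb
        · rw [Set.mem_singleton_iff] at hz; subst hz; exact hGyc
      · exact hz.1
    have hdisj : Disjoint ({a, b, c} : Set V) (G.neighborSet y ∩ X) := by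
      rw [Set.disjoint_left]
      rintro z (rfl | rfl | hz) hz2
      · exact ha hz2.2
      · exact hb hz2.2
      · rw [Set.mem_singleton_iff] at hz; subst hz; exact hc hz2.2
    have hcard3 : ({a, b, c} : Set V).ncard = 3 := by
      rw [Set.ncard_insert_of_notMem (by simp [hab.ne, hac.ne]) (Set.toFinite _),
        Set.ncard_pair hbc.ne]
    have h5 : 5 ≤ (G.neighborSet y).ncard := by
      calc 5 ≤ ({a, b, c} : Set V).ncard + (G.neighborSet y ∩ X).ncard := by
              rw [hcard3]; have := hX y hyX; omega
        _ = (({a, b, c} : Set V) ∪ (G.neighborSet y ∩ X)).ncard :=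
              (Set.ncard_union_eq hdisj (Set.toFinite _) (Set.toFinite _)).symm
        _ ≤ (G.neighborSet y).ncard := Set.ncard_le_ncard hsub (Set.toFinite _)
    have := hdeg y
    omega
  · -- {y, a, b, c} is a K4 in G − X.
    have hya' : y ∈ (Xᶜ : Set V) := hyX
    have ha' : a ∈ (Xᶜ : Set V) := ha
    have hb' : b ∈ (Xᶜ : Set V) := hb
    have hc' : c ∈ (Xᶜ : Set V) := hc
    refine hK4 {⟨y, hya'⟩, ⟨a, ha'⟩, ⟨b, hb'⟩, ⟨c, hc'⟩} ⟨?_, ?_⟩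
    · rintro ⟨p, hp⟩ hps ⟨q, hq⟩ hqs hpq
      simp only [Finset.coe_insert, Set.mem_insert_iff, Finset.coe_singleton,
        Set.mem_singleton_iff, Subtype.mk.injEq] at hps hqs
      have hne : p ≠ q := fun h => hpq (Subtype.ext h)
      rcases hps with rfl | rfl | rfl | rfl <;> rcases hqs with rfl | rfl | rfl | rfl <;>
        simp_all [SimpleGraph.comap_adj, hGya, hGyb, hGyc, hab, hbc, hac,
          hGya.symm, hGyb.symm, hGyc.symm, hab.symm, hbc.symm, hac.symm]
    · rw [Finset.card_insert_of_notMem (by simp [hya, hyb, hyc]),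
        Finset.card_insert_of_notMem (by simp [hab.ne, hac.ne]),
        Finset.card_insert_of_notMem (by simp [hbc.ne]),
        Finset.card_singleton]
end
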